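/- arXiv:0802.2438 — 9 statements merged into one kernel-verified Lean document; each statement's English description precedes it below -/
import Mathlib

section
/- Let n ≥ 2, let a₀,…,aₙ be nonzero complex numbers, bⱼ ∈ ℂ with bⱼ² = aⱼ, let z₀ := 1 and z₁,…,z_{n-1} ∈ ℂ. Let U₁,…,Uₙ ⊆ ℂ be open sets and let fₖ, gₖ : Uₖ → ℂ (k = 1,…,n−1) and h : Uₙ → ℂ be differentiable functions satisfying, for all t in their domains: fₖ(t)² = (z_{k-1} − zₖ)a₀ + (aₖ − z_{k-1}a₀)sin²(t); fₖ′(t)² + fₖ(t)²gₖ′(t)² = aₖ − (aₖ − z_{k-1}a₀)sin²(t); h′(t)² = aₙ − (aₙ − z_{n-1}a₀)sin²(t). Then the maps X and Y have the same first fundamental form: for every u ∈ U₁×⋯×Uₙ and all v, w ∈ ℂⁿ, ⟨DX(u)v, DX(u)w⟩ = ⟨DY(u)v, DY(u)w⟩, where DX(u), DY(u) denote the (ℂ-linear) Fréchet derivatives. -/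
noncomputable section

open Complex Finset

/-- Complex bilinear (non-Hermitian) dot product on ℂᵐ. -/
def cdot {m : ℕ} (x y : Fin m → ℂ) : ℂ := ∑ i, x i * y i

/-- `Cprod n k u = ∏_{j=k+1}^{n} cos(uʲ)` (zero-based: product of `cos (u j)` over `j ≥ k`). -/
def Cprod (n k : ℕ) (u : Fin n → ℂ) : ℂ :=
  ∏ j ∈ Finset.univ.filter (fun j : Fin n => k ≤ (j : ℕ)), Complex.cos (u j)

/-- Spherical-coordinate parametrization of the quadric `∑ xⱼ²/aⱼ = 1` (with `bⱼ² = aⱼ`). -/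
def sphX (n : ℕ) (b : Fin (n+1) → ℂ) (u : Fin n → ℂ) : Fin (n+1) → ℂ :=
  Fin.cons (b 0 * Cprod n 0 u)
    (fun k : Fin n => b k.succ * Cprod n (k.val + 1) u * Complex.sin (u k))

/-- With `n = m+1`, the map `Y : ℂⁿ → ℂ²ⁿ⁻¹`,
`Y(u) = ∑_{k=1}^{n-1} Cₖ(u) fₖ(uᵏ)(cos(gₖ(uᵏ)) e_{2k-2} + sin(gₖ(uᵏ)) e_{2k-1}) + h(uⁿ) e_{2n-2}`,
written in coordinates (zero-based indices: the k-th summand hits coordinates `2k`, `2k+1`). -/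
def petY (m : ℕ) (f g : Fin m → ℂ → ℂ) (h : ℂ → ℂ) (u : Fin (m+1) → ℂ) :
    Fin (2*m+1) → ℂ :=
  fun i =>
    (∑ k : Fin m,
      Cprod (m+1) (k.val + 1) u * f k (u k.castSucc) *
        ((if (i : ℕ) = 2*k.val then 1 else 0) * Complex.cos (g k (u k.castSucc)) +
         (if (i : ℕ) = 2*k.val + 1 then 1 else 0) * Complex.sin (g k (u k.castSucc))))
    + (if (i : ℕ) = 2*m then 1 else 0) * h (u (Fin.last m))

open scoped Topology

/-! Write `Cₖ` for the cosine products and `dCₖ` for their differentials, so that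
`dCₖ₋₁ = cos uᵏ · dCₖ - sin uᵏ · Cₖ duᵏ`. By the polar-coordinate formula, the pair of
coordinates `Cₖ fₖ (cos gₖ, sin gₖ)` of `Y` contributes `d(Cₖ fₖ)² + (Cₖ fₖ)² dgₖ²` to the
first fundamental form. The two equations for `fₖ, gₖ`, together with the derivative
`fₖ fₖ' = (aₖ - zₖ₋₁ a₀) sin cos` of the first one, turn this into the contribution `(dXₖ)²`
of `X` plus the telescoping difference `zₖ₋₁ a₀ dCₖ₋₁² - zₖ a₀ dCₖ²`. The equation for `h`
gives `(dXₙ)² + zₙ₋₁ a₀ dCₙ₋₁²` for the last coordinate, and the telescope leaves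
`z₀ a₀ dC₀² = (dX₀)²`. -/

theorem Fin.sum_univ_castSucc_sub_succ {G : Type*} [AddCommGroup G] :
    ∀ {m : ℕ} (T : Fin (m + 1) → G), ∑ k : Fin m, (T k.castSucc - T k.succ) = T 0 - T (Fin.last m)
  | 0, T => by simp
  | m + 1, T => by
    rw [Fin.sum_univ_castSucc]
    simp only [Fin.succ_castSucc]
    rw [Fin.sum_univ_castSucc_sub_succ (fun i => T i.castSucc), Fin.succ_last, Fin.castSucc_zero,
      sub_add_sub_cancel]

theorem Fin.sum_univ_two_mul_add_one {M : Type*} [AddCommMonoid M] :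
    ∀ {m : ℕ} (F : Fin (2 * m + 1) → M), ∑ i, F i =
      ∑ k : Fin m, (F ⟨2 * k, by omega⟩ + F ⟨2 * k + 1, by omega⟩) + F (Fin.last (2 * m))
  | 0, F => by simp
  | m + 1, F => by
    refine (Fin.sum_univ_castSucc (n := 2 * m + 2) F).trans ?_
    rw [Fin.sum_univ_castSucc (n := 2 * m + 1),
      Fin.sum_univ_two_mul_add_one (fun i => F i.castSucc.castSucc), Fin.sum_univ_castSucc (n := m)]
    simp only [add_assoc]
    rfl

theorem cdot_fderiv_eq_sum {E : Type*} [NormedAddCommGroup E] [NormedSpace ℂ E] {p : ℕ}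
    {F : E → Fin p → ℂ} {u : E} (hF : DifferentiableAt ℂ F u) (v w : E) :
    cdot (fderiv ℂ F u v) (fderiv ℂ F u w)
      = ∑ i, fderiv ℂ (fun x => F x i) u v * fderiv ℂ (fun x => F x i) u w := by
  simp [cdot, fderiv_apply hF]

theorem fderiv_mul_cos_add_fderiv_mul_sin {E : Type*} [NormedAddCommGroup E] [NormedSpace ℂ E]
    {φ G : E → ℂ} {u : E} (hφ : DifferentiableAt ℂ φ u) (hG : DifferentiableAt ℂ G u) (v w : E) :
    fderiv ℂ (fun x => φ x * cos (G x)) u v * fderiv ℂ (fun x => φ x * cos (G x)) u w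
      + fderiv ℂ (fun x => φ x * sin (G x)) u v * fderiv ℂ (fun x => φ x * sin (G x)) u w
      = fderiv ℂ φ u v * fderiv ℂ φ u w + φ u ^ 2 * (fderiv ℂ G u v * fderiv ℂ G u w) := by
  have hcos : HasFDerivAt (fun x => φ x * cos (G x)) _ u :=
    hφ.hasFDerivAt.mul hG.hasFDerivAt.ccos
  have hsin : HasFDerivAt (fun x => φ x * sin (G x)) _ u :=
    hφ.hasFDerivAt.mul hG.hasFDerivAt.csin
  rw [hcos.fderiv, hsin.fderiv]
  simp only [FunLike.coe_add, FunLike.coe_smul, Pi.add_apply, Pi.smul_apply, smul_eq_mul]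
  linear_combination (fderiv ℂ φ u v * fderiv ℂ φ u w
    + φ u ^ 2 * (fderiv ℂ G u v * fderiv ℂ G u w)) * sin_sq_add_cos_sq (G u)

theorem mul_deriv_eq_of_sq_eq {f : ℂ → ℂ} {t c d : ℂ} (hf : DifferentiableAt ℂ f t)
    (heq : ∀ᶠ x in 𝓝 t, f x ^ 2 = c + d * sin x ^ 2) :
    f t * deriv f t = d * (sin t * cos t) := by
  have hsq : HasDerivAt (fun x => c + d * sin x ^ 2) (d * (2 * sin t ^ 1 * cos t)) t :=
    ((hasDerivAt_sin t).pow 2).const_mul d |>.const_add c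
  have := ((hf.hasDerivAt.pow 2).congr_of_eventuallyEq (heq.mono fun _ hx => hx.symm)).unique hsq
  linear_combination this / 2

section Eval

variable {ι : Type*} [Fintype ι] {u : ι → ℂ} {p : ι} {ψ : ℂ → ℂ}

theorem hasFDerivAt_comp_eval (hψ : DifferentiableAt ℂ ψ (u p)) :
    HasFDerivAt (fun x : ι → ℂ => ψ (x p))
      (deriv ψ (u p) • ContinuousLinearMap.proj (R := ℂ) (φ := fun _ : ι => ℂ) p) u :=
  hψ.hasDerivAt.comp_hasFDerivAt u (hasFDerivAt_apply (𝕜 := ℂ) (F' := fun _ => ℂ) p u)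

theorem fderiv_comp_eval_apply (hψ : DifferentiableAt ℂ ψ (u p)) (v : ι → ℂ) :
    fderiv ℂ (fun x : ι → ℂ => ψ (x p)) u v = deriv ψ (u p) * v p := by
  simp [(hasFDerivAt_comp_eval hψ).fderiv]

theorem fderiv_mul_comp_eval_apply {C : (ι → ℂ) → ℂ} (hC : DifferentiableAt ℂ C u)
    (hψ : DifferentiableAt ℂ ψ (u p)) (v : ι → ℂ) :
    fderiv ℂ (fun x => C x * ψ (x p)) u v
      = C u * (deriv ψ (u p) * v p) + ψ (u p) * fderiv ℂ C u v := by
  have hmul : HasFDerivAt (fun x => C x * ψ (x p)) _ u :=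
    hC.hasFDerivAt.mul (hasFDerivAt_comp_eval hψ)
  rw [hmul.fderiv]
  simp

end Eval

section Cprod

variable {n : ℕ}

theorem Cprod_eq_cos_mul (p : Fin n) (u : Fin n → ℂ) :
    Cprod n p u = cos (u p) * Cprod n (p + 1) u := by
  have hsplit : univ.filter (fun j : Fin n => (p : ℕ) ≤ j)
      = insert p (univ.filter (fun j : Fin n => (p : ℕ) + 1 ≤ j)) := by
    ext j
    simp only [mem_filter, mem_univ, true_and, mem_insert, Fin.ext_iff]
    omega
  rw [Cprod, hsplit, prod_insert (by simp)]
  rfl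

theorem Cprod_self (u : Fin n → ℂ) : Cprod n n u = 1 :=
  prod_eq_one fun j hj => absurd (mem_filter.1 hj).2 (not_le.2 j.isLt)

@[fun_prop]
theorem differentiable_Cprod (k : ℕ) : Differentiable ℂ (Cprod n k) := by
  unfold Cprod
  fun_prop

theorem fderiv_Cprod_self (u : Fin n → ℂ) : fderiv ℂ (Cprod n n) u = 0 := by
  simp [show Cprod n n = fun _ => 1 from funext Cprod_self]

theorem fderiv_Cprod_apply (p : Fin n) (u v : Fin n → ℂ) :
    fderiv ℂ (Cprod n p) u v
      = cos (u p) * fderiv ℂ (Cprod n (p + 1)) u v - sin (u p) * v p * Cprod n (p + 1) u := by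
  rw [show Cprod n p = fun x => Cprod n (p + 1) x * cos (x p) from
      funext fun x => (Cprod_eq_cos_mul p x).trans (mul_comm _ _),
    fderiv_mul_comp_eval_apply (differentiable_Cprod _ u) differentiableAt_cos, Complex.deriv_cos]
  ring

end Cprod

section sphX

variable {n : ℕ} (b : Fin (n + 1) → ℂ)

theorem differentiable_sphX : Differentiable ℂ (sphX n b) := by
  refine differentiable_pi.2 fun i => Fin.cases ?_ (fun k => ?_) i
  · simp only [sphX, Fin.cons_zero]
    fun_prop
  · simp only [sphX, Fin.cons_succ]
    fun_prop

theorem fderiv_sphX_zero_apply (u v : Fin n → ℂ) :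
    fderiv ℂ (fun x => sphX n b x 0) u v = b 0 * fderiv ℂ (Cprod n 0) u v := by
  simp [sphX, fderiv_const_mul (differentiable_Cprod 0 u)]

theorem fderiv_sphX_succ_apply (k : Fin n) (u v : Fin n → ℂ) :
    fderiv ℂ (fun x => sphX n b x k.succ) u v
      = b k.succ * (Cprod n (k + 1) u * (cos (u k) * v k)
          + sin (u k) * fderiv ℂ (Cprod n (k + 1)) u v) := by
  have hcoord : (fun x => sphX n b x k.succ)
      = fun x => b k.succ * (Cprod n (k + 1) x * sin (x k)) := by
    funext x
    simp [sphX, mul_assoc]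
  rw [hcoord, fderiv_const_mul (by fun_prop), FunLike.coe_smul, Pi.smul_apply, smul_eq_mul,
    fderiv_mul_comp_eval_apply (differentiable_Cprod _ u) differentiableAt_sin, Complex.deriv_sin]

end sphX

section petY

variable {m : ℕ} (f g : Fin m → ℂ → ℂ) (h : ℂ → ℂ)

theorem petY_apply_two_mul (k : Fin m) (u : Fin (m + 1) → ℂ) :
    petY m f g h u ⟨2 * k, by omega⟩
      = Cprod (m + 1) (k + 1) u * f k (u k.castSucc) * cos (g k (u k.castSucc)) := by
  simp only [petY]
  rw [sum_eq_single k, if_pos rfl, if_neg (by omega), if_neg (by omega)]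
  · ring
  · intro k' _ hk'
    have := Fin.val_ne_of_ne hk'
    rw [if_neg (by omega), if_neg (by omega)]
    ring
  · simp

theorem petY_apply_two_mul_add_one (k : Fin m) (u : Fin (m + 1) → ℂ) :
    petY m f g h u ⟨2 * k + 1, by omega⟩
      = Cprod (m + 1) (k + 1) u * f k (u k.castSucc) * sin (g k (u k.castSucc)) := by
  simp only [petY]
  rw [sum_eq_single k, if_neg (by omega), if_pos rfl, if_neg (by omega)]
  · ring
  · intro k' _ hk'
    have := Fin.val_ne_of_ne hk'
    rw [if_neg (by omega), if_neg (by omega)]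
    ring
  · simp

theorem petY_apply_last (u : Fin (m + 1) → ℂ) :
    petY m f g h u (Fin.last (2 * m)) = h (u (Fin.last m)) := by
  simp only [petY, Fin.val_last, if_true]
  rw [sum_eq_zero fun k _ => by rw [if_neg (by omega), if_neg (by omega)]; ring]
  ring

variable {f g h} {u : Fin (m + 1) → ℂ}

theorem differentiableAt_petY (hf : ∀ k, DifferentiableAt ℂ (f k) (u k.castSucc))
    (hg : ∀ k, DifferentiableAt ℂ (g k) (u k.castSucc))
    (hh : DifferentiableAt ℂ h (u (Fin.last m))) : DifferentiableAt ℂ (petY m f g h) u := by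
  refine differentiableAt_pi.2 fun i => ?_
  unfold petY
  fun_prop

theorem fderiv_petY_pair (k : Fin m) (hf : DifferentiableAt ℂ (f k) (u k.castSucc))
    (hg : DifferentiableAt ℂ (g k) (u k.castSucc)) (v w : Fin (m + 1) → ℂ) :
    fderiv ℂ (fun x => petY m f g h x ⟨2 * k, by omega⟩) u v
        * fderiv ℂ (fun x => petY m f g h x ⟨2 * k, by omega⟩) u w
      + fderiv ℂ (fun x => petY m f g h x ⟨2 * k + 1, by omega⟩) u v
        * fderiv ℂ (fun x => petY m f g h x ⟨2 * k + 1, by omega⟩) u w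
      = (Cprod (m + 1) (k + 1) u * (deriv (f k) (u k.castSucc) * v k.castSucc)
            + f k (u k.castSucc) * fderiv ℂ (Cprod (m + 1) (k + 1)) u v)
          * (Cprod (m + 1) (k + 1) u * (deriv (f k) (u k.castSucc) * w k.castSucc)
            + f k (u k.castSucc) * fderiv ℂ (Cprod (m + 1) (k + 1)) u w)
        + (Cprod (m + 1) (k + 1) u * f k (u k.castSucc)) ^ 2
          * (deriv (g k) (u k.castSucc) * v k.castSucc
            * (deriv (g k) (u k.castSucc) * w k.castSucc)) := by
  simp only [petY_apply_two_mul, petY_apply_two_mul_add_one]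
  rw [fderiv_mul_cos_add_fderiv_mul_sin
      (φ := fun x => Cprod (m + 1) (k + 1) x * f k (x k.castSucc))
      (G := fun x => g k (x k.castSucc)) (by fun_prop) (by fun_prop),
    fderiv_mul_comp_eval_apply (differentiable_Cprod _ u) hf,
    fderiv_mul_comp_eval_apply (differentiable_Cprod _ u) hf,
    fderiv_comp_eval_apply hg, fderiv_comp_eval_apply hg]

end petY

theorem peterson_pair_identity {C dv dw vk wk F F' G' s c A B z z' a₀ : ℂ}
    (hF : F ^ 2 = (z - z') * a₀ + (A - z * a₀) * s ^ 2) (hFF' : F * F' = (A - z * a₀) * (s * c))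
    (hG : F' ^ 2 + F ^ 2 * G' ^ 2 = A - (A - z * a₀) * s ^ 2) (hB : B ^ 2 = A)
    (hsc : s ^ 2 + c ^ 2 = 1) :
    (C * (F' * vk) + F * dv) * (C * (F' * wk) + F * dw) + (C * F) ^ 2 * (G' * vk * (G' * wk))
      = B * (C * (c * vk) + s * dv) * (B * (C * (c * wk) + s * dw))
        + (z * a₀ * ((c * dv - s * vk * C) * (c * dw - s * wk * C)) - z' * a₀ * (dv * dw)) := by
  linear_combination (dv * dw) * hF + C * (dv * wk + dw * vk) * hFF' + C ^ 2 * (vk * wk) * hG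
    - (z * a₀ * (dv * dw) + A * C ^ 2 * (vk * wk)) * hsc
    - ((s * dv + C * c * vk) * (s * dw + C * c * wk)) * hB

section Peterson

variable {m : ℕ} {f g : Fin m → ℂ → ℂ} {h : ℂ → ℂ} {a b : Fin (m + 2) → ℂ} {Z : Fin (m + 1) → ℂ}
  {u : Fin (m + 1) → ℂ}

theorem petY_pair_eq_sphX_add_sub (k : Fin m) (hf : DifferentiableAt ℂ (f k) (u k.castSucc))
    (hg : DifferentiableAt ℂ (g k) (u k.castSucc))
    (heqf : ∀ᶠ t in 𝓝 (u k.castSucc), f k t ^ 2 = (Z k.castSucc - Z k.succ) * a 0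
        + (a k.castSucc.succ - Z k.castSucc * a 0) * sin t ^ 2)
    (heqg : deriv (f k) (u k.castSucc) ^ 2
        + f k (u k.castSucc) ^ 2 * deriv (g k) (u k.castSucc) ^ 2
        = a k.castSucc.succ - (a k.castSucc.succ - Z k.castSucc * a 0) * sin (u k.castSucc) ^ 2)
    (hb : b k.castSucc.succ ^ 2 = a k.castSucc.succ) (v w : Fin (m + 1) → ℂ) :
    fderiv ℂ (fun x => petY m f g h x ⟨2 * k, by omega⟩) u v
        * fderiv ℂ (fun x => petY m f g h x ⟨2 * k, by omega⟩) u w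
      + fderiv ℂ (fun x => petY m f g h x ⟨2 * k + 1, by omega⟩) u v
        * fderiv ℂ (fun x => petY m f g h x ⟨2 * k + 1, by omega⟩) u w
      = fderiv ℂ (fun x => sphX (m + 1) b x k.castSucc.succ) u v
          * fderiv ℂ (fun x => sphX (m + 1) b x k.castSucc.succ) u w
        + (Z k.castSucc * a 0 * (fderiv ℂ (Cprod (m + 1) k.castSucc) u v
              * fderiv ℂ (Cprod (m + 1) k.castSucc) u w)
          - Z k.succ * a 0 * (fderiv ℂ (Cprod (m + 1) k.succ) u v
              * fderiv ℂ (Cprod (m + 1) k.succ) u w)) := by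
  rw [fderiv_petY_pair k hf hg, fderiv_sphX_succ_apply, fderiv_sphX_succ_apply,
    fderiv_Cprod_apply k.castSucc u v, fderiv_Cprod_apply k.castSucc u w]
  simp only [Fin.val_castSucc, Fin.val_succ]
  exact peterson_pair_identity heqf.self_of_nhds (mul_deriv_eq_of_sq_eq hf heqf) heqg hb
    (sin_sq_add_cos_sq _)

theorem petY_last_eq_sphX_add (hh : DifferentiableAt ℂ h (u (Fin.last m)))
    (heqh : deriv h (u (Fin.last m)) ^ 2 = a (Fin.last (m + 1))
        - (a (Fin.last (m + 1)) - Z (Fin.last m) * a 0) * sin (u (Fin.last m)) ^ 2)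
    (hb : b (Fin.last (m + 1)) ^ 2 = a (Fin.last (m + 1))) (v w : Fin (m + 1) → ℂ) :
    fderiv ℂ (fun x => petY m f g h x (Fin.last (2 * m))) u v
        * fderiv ℂ (fun x => petY m f g h x (Fin.last (2 * m))) u w
      = fderiv ℂ (fun x => sphX (m + 1) b x (Fin.last m).succ) u v
          * fderiv ℂ (fun x => sphX (m + 1) b x (Fin.last m).succ) u w
        + Z (Fin.last m) * a 0 * (fderiv ℂ (Cprod (m + 1) (Fin.last m)) u v
            * fderiv ℂ (Cprod (m + 1) (Fin.last m)) u w) := by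
  simp only [petY_apply_last]
  rw [fderiv_comp_eval_apply hh, fderiv_comp_eval_apply hh, fderiv_sphX_succ_apply,
    fderiv_sphX_succ_apply, fderiv_Cprod_apply, fderiv_Cprod_apply]
  simp only [Fin.val_last, Fin.succ_last, Cprod_self, fderiv_Cprod_self, zero_apply]
  linear_combination v (Fin.last m) * w (Fin.last m) * heqh
    - a (Fin.last (m + 1)) * v (Fin.last m) * w (Fin.last m) * sin_sq_add_cos_sq (u (Fin.last m))
    - cos (u (Fin.last m)) ^ 2 * v (Fin.last m) * w (Fin.last m) * hb

end Peterson

/-- Peterson's `(n-1)`-parameter family of deformations of the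
`n`-dimensional quadric (here `n = m+1 ≥ 2`): `X` and `Y = X_𝐳` have the same
first fundamental form. `Z = (z₀, z₁, …, z_{n-1})` with `z₀ = 1`. -/
theorem stmt0 (m : ℕ)
    (a b : Fin (m+2) → ℂ) (hb : ∀ j, (b j)^2 = a j)
    (U : Fin (m+1) → Set ℂ) (hU : ∀ k, IsOpen (U k))
    (f g : Fin m → ℂ → ℂ) (h : ℂ → ℂ)
    (hf : ∀ k : Fin m, DifferentiableOn ℂ (f k) (U k.castSucc))
    (hg : ∀ k : Fin m, DifferentiableOn ℂ (g k) (U k.castSucc))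
    (hh : DifferentiableOn ℂ h (U (Fin.last m)))
    (Z : Fin (m+1) → ℂ) (hZ0 : Z 0 = 1)
    (heqf : ∀ k : Fin m, ∀ t ∈ U k.castSucc,
      (f k t)^2 = (Z k.castSucc - Z k.succ) * a 0
        + (a ⟨k.val + 1, by omega⟩ - Z k.castSucc * a 0) * (Complex.sin t)^2)
    (heqg : ∀ k : Fin m, ∀ t ∈ U k.castSucc,
      (deriv (f k) t)^2 + (f k t)^2 * (deriv (g k) t)^2
        = a ⟨k.val + 1, by omega⟩
          - (a ⟨k.val + 1, by omega⟩ - Z k.castSucc * a 0) * (Complex.sin t)^2)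
    (heqh : ∀ t ∈ U (Fin.last m),
      (deriv h t)^2 = a (Fin.last (m+1))
        - (a (Fin.last (m+1)) - Z (Fin.last m) * a 0) * (Complex.sin t)^2) :
    ∀ u : Fin (m+1) → ℂ, (∀ k, u k ∈ U k) →
      ∀ v w : Fin (m+1) → ℂ,
        cdot (fderiv ℂ (sphX (m+1) b) u v) (fderiv ℂ (sphX (m+1) b) u w)
          = cdot (fderiv ℂ (petY m f g h) u v) (fderiv ℂ (petY m f g h) u w) := by
  intro u hu v w
  have hnhds : ∀ k, U k ∈ 𝓝 (u k) := fun k => (hU k).mem_nhds (hu k)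
  have hfd : ∀ k, DifferentiableAt ℂ (f k) (u k.castSucc) :=
    fun k => (hf k).differentiableAt (hnhds _)
  have hgd : ∀ k, DifferentiableAt ℂ (g k) (u k.castSucc) :=
    fun k => (hg k).differentiableAt (hnhds _)
  have hhd : DifferentiableAt ℂ h (u (Fin.last m)) := hh.differentiableAt (hnhds _)
  have hfirst : fderiv ℂ (fun x => sphX (m + 1) b x 0) u v
        * fderiv ℂ (fun x => sphX (m + 1) b x 0) u w
      = Z 0 * a 0 * (fderiv ℂ (Cprod (m + 1) (0 : Fin (m + 1))) u v
          * fderiv ℂ (Cprod (m + 1) (0 : Fin (m + 1))) u w) := by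
    rw [fderiv_sphX_zero_apply, fderiv_sphX_zero_apply, hZ0, ← hb 0, Fin.val_zero]
    ring
  have htelescope := Fin.sum_univ_castSucc_sub_succ fun j : Fin (m + 1) =>
    Z j * a 0 * (fderiv ℂ (Cprod (m + 1) j) u v * fderiv ℂ (Cprod (m + 1) j) u w)
  rw [cdot_fderiv_eq_sum (differentiable_sphX b u), Fin.sum_univ_succ, Fin.sum_univ_castSucc,
    cdot_fderiv_eq_sum (differentiableAt_petY hfd hgd hhd), Fin.sum_univ_two_mul_add_one,
    sum_congr rfl fun k _ => petY_pair_eq_sphX_add_sub k (hfd k) (hgd k)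
      (Filter.eventually_of_mem (hnhds _) (heqf k)) (heqg k _ (hu _)) (hb _) v w,
    petY_last_eq_sphX_add hhd (heqh _ (hu _)) (hb _) v w, sum_add_distrib, htelescope, hfirst]
  ring
end
end

section
/- Let a₀, a₁, a₂ be nonzero complex numbers, bⱼ ∈ ℂ with bⱼ² = aⱼ, and z ∈ ℂ. Let U₁, U₂ ⊆ ℂ be open and let f, g : U₁ → ℂ and h : U₂ → ℂ be differentiable with f(t)² = (1−z)a₀ + (a₁−a₀)sin²(t), f′(t)² + f(t)²g′(t)² = a₁ − (a₁−a₀)sin²(t) for t ∈ U₁, and h′(t)² = a₂ − (a₂ − z a₀)sin²(t) for t ∈ U₂. Define X : ℂ² → ℂ³ by X(u¹,u²) := (b₀cos(u²)cos(u¹), b₁cos(u²)sin(u¹), b₂sin(u²)) and Y : U₁×U₂ → ℂ³ by Y(u¹,u²) := (cos(u²)f(u¹)cos(g(u¹)), cos(u²)f(u¹)sin(g(u¹)), h(u²)). Then X and Y have the same first fundamental form: for every u ∈ U₁×U₂ and all v, w ∈ ℂ², ⟨DX(u)v, DX(u)w⟩ = ⟨DY(u)v, DY(u)w⟩. -/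
noncomputable section

open Complex Finset

/-!
Both `X` and `Y` have the shape `u ↦ (c(u²) p(u¹), c(u²) q(u¹), r(u²))` with `c = cos`, and such a
map has first fundamental form `E = c² (p'² + q'²)`, `F = c c' (p p' + q q')`,
`G = c'² (p² + q²) + r'²`. For `Y`, with `(p, q) = f · (cos g, sin g)`, these are
`c² (f'² + f² g'²)`, `c c' f f'` and `c'² f² + h'²`, so comparing with `X` reduces, via
`sin² + cos² = 1`, to the three equations on `f`, `g`, `h`; for `F` one needs
`f f' = (a₁ - a₀) sin cos`, obtained by differentiating the equation for `f²`.
-/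

open ContinuousLinearMap

def warpedSurface (c r p q : ℂ → ℂ) (u : Fin 2 → ℂ) : Fin 3 → ℂ :=
  ![c (u 1) * p (u 0), c (u 1) * q (u 0), r (u 1)]

section

variable {c r p q : ℂ → ℂ} {c' r' p' q' : ℂ} {u : Fin 2 → ℂ}

lemma hasFDerivAt_apply_one_mul_apply_zero (hc : HasDerivAt c c' (u 1))
    (hp : HasDerivAt p p' (u 0)) :
    HasFDerivAt (fun u : Fin 2 → ℂ => c (u 1) * p (u 0))
      ((c (u 1) * p') • proj 0 + (c' * p (u 0)) • proj 1 : (Fin 2 → ℂ) →L[ℂ] ℂ) u := by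
  refine ((hc.comp_hasFDerivAt u (hasFDerivAt_apply 1 u)).mul
    (hp.comp_hasFDerivAt u (hasFDerivAt_apply 0 u))).congr_fderiv ?_
  ext v; simp; ring

theorem hasFDerivAt_warpedSurface (hc : HasDerivAt c c' (u 1)) (hr : HasDerivAt r r' (u 1))
    (hp : HasDerivAt p p' (u 0)) (hq : HasDerivAt q q' (u 0)) :
    HasFDerivAt (warpedSurface c r p q)
      ((proj 0).smulRight ![c (u 1) * p', c (u 1) * q', 0] +
        (proj 1).smulRight ![c' * p (u 0), c' * q (u 0), r'] : (Fin 2 → ℂ) →L[ℂ] Fin 3 → ℂ) u := by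
  refine hasFDerivAt_pi'' fun i => ?_
  fin_cases i
  · exact (hasFDerivAt_apply_one_mul_apply_zero hc hp).congr_fderiv (by ext; simp; ring)
  · exact (hasFDerivAt_apply_one_mul_apply_zero hc hq).congr_fderiv (by ext; simp; ring)
  · exact (hr.comp_hasFDerivAt (𝕜 := ℂ) u (hasFDerivAt_apply 1 u)).congr_fderiv
      (by ext; simp; ring)

theorem cdot_fderiv_warpedSurface (hc : HasDerivAt c c' (u 1)) (hr : HasDerivAt r r' (u 1))
    (hp : HasDerivAt p p' (u 0)) (hq : HasDerivAt q q' (u 0)) (v w : Fin 2 → ℂ) :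
    cdot (fderiv ℂ (warpedSurface c r p q) u v) (fderiv ℂ (warpedSurface c r p q) u w) =
      c (u 1) ^ 2 * (p' ^ 2 + q' ^ 2) * (v 0 * w 0)
      + c (u 1) * c' * (p (u 0) * p' + q (u 0) * q') * (v 0 * w 1 + v 1 * w 0)
      + (c' ^ 2 * (p (u 0) ^ 2 + q (u 0) ^ 2) + r' ^ 2) * (v 1 * w 1) := by
  rw [(hasFDerivAt_warpedSurface hc hr hp hq).fderiv]
  simp [cdot, Fin.sum_univ_three]
  ring

theorem cdot_fderiv_warpedSurface_polar {f g : ℂ → ℂ} {f' g' : ℂ} (hc : HasDerivAt c c' (u 1))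
    (hr : HasDerivAt r r' (u 1)) (hf : HasDerivAt f f' (u 0)) (hg : HasDerivAt g g' (u 0))
    (v w : Fin 2 → ℂ) :
    cdot (fderiv ℂ (warpedSurface c r (fun t => f t * cos (g t)) (fun t => f t * sin (g t))) u v)
      (fderiv ℂ (warpedSurface c r (fun t => f t * cos (g t)) (fun t => f t * sin (g t))) u w) =
      c (u 1) ^ 2 * (f' ^ 2 + f (u 0) ^ 2 * g' ^ 2) * (v 0 * w 0)
      + c (u 1) * c' * (f (u 0) * f') * (v 0 * w 1 + v 1 * w 0)
      + (c' ^ 2 * f (u 0) ^ 2 + r' ^ 2) * (v 1 * w 1) := by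
  rw [cdot_fderiv_warpedSurface hc hr (hf.fun_mul hg.ccos) (hf.fun_mul hg.csin)]
  linear_combination (c (u 1) ^ 2 * (f' ^ 2 + f (u 0) ^ 2 * g' ^ 2) * (v 0 * w 0)
    + c (u 1) * c' * (f (u 0) * f') * (v 0 * w 1 + v 1 * w 0)
    + c' ^ 2 * f (u 0) ^ 2 * (v 1 * w 1)) * sin_sq_add_cos_sq (g (u 0))

end

theorem two_mul_mul_eq_of_sq_eventuallyEq {f g : ℂ → ℂ} {f' g' x : ℂ}
    (hf : HasDerivAt f f' x) (hg : HasDerivAt g g' x) (hfg : (f · ^ 2) =ᶠ[nhds x] g) :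
    2 * f x * f' = g' := by
  have := (hf.pow 2).congr_of_eventuallyEq hfg.symm
  simpa using this.unique hg

theorem stmt1_general (a₀ a₁ a₂ b₀ b₁ b₂ : ℂ)
    (hb₀ : b₀^2 = a₀) (hb₁ : b₁^2 = a₁) (hb₂ : b₂^2 = a₂) (z : ℂ)
    (U₁ U₂ : Set ℂ) (hU₁ : IsOpen U₁) (hU₂ : IsOpen U₂)
    (f g h : ℂ → ℂ)
    (hf : DifferentiableOn ℂ f U₁) (hg : DifferentiableOn ℂ g U₁)
    (hh : DifferentiableOn ℂ h U₂)
    (heqf : ∀ t ∈ U₁, (f t)^2 = (1 - z) * a₀ + (a₁ - a₀) * (Complex.sin t)^2)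
    (heqg : ∀ t ∈ U₁, (deriv f t)^2 + (f t)^2 * (deriv g t)^2
      = a₁ - (a₁ - a₀) * (Complex.sin t)^2)
    (heqh : ∀ t ∈ U₂, (deriv h t)^2 = a₂ - (a₂ - z * a₀) * (Complex.sin t)^2)
    (X Y : (Fin 2 → ℂ) → (Fin 3 → ℂ))
    (hX : X = fun u => ![b₀ * Complex.cos (u 1) * Complex.cos (u 0),
      b₁ * Complex.cos (u 1) * Complex.sin (u 0), b₂ * Complex.sin (u 1)])
    (hY : Y = fun u => ![Complex.cos (u 1) * f (u 0) * Complex.cos (g (u 0)),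
      Complex.cos (u 1) * f (u 0) * Complex.sin (g (u 0)), h (u 1)]) :
    ∀ u : Fin 2 → ℂ, u 0 ∈ U₁ → u 1 ∈ U₂ →
      ∀ v w : Fin 2 → ℂ,
        cdot (fderiv ℂ X u v) (fderiv ℂ X u w) = cdot (fderiv ℂ Y u v) (fderiv ℂ Y u w) := by
  intro u hu₀ hu₁ v w
  have hX' : X = warpedSurface cos (b₂ * sin ·) (b₀ * cos ·) (b₁ * sin ·) := by
    subst hX; funext u; ext i; fin_cases i <;> simp [warpedSurface] <;> ring
  have hY' : Y = warpedSurface cos h (fun t => f t * cos (g t)) (fun t => f t * sin (g t)) := by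
    subst hY; funext u; ext i; fin_cases i <;> simp [warpedSurface] <;> ring
  have hfd := (hf.differentiableAt (hU₁.mem_nhds hu₀)).hasDerivAt
  have hgd := (hg.differentiableAt (hU₁.mem_nhds hu₀)).hasDerivAt
  have hhd := (hh.differentiableAt (hU₂.mem_nhds hu₁)).hasDerivAt
  have hff := two_mul_mul_eq_of_sq_eventuallyEq hfd
    ((((hasDerivAt_sin (u 0)).pow 2).const_mul (a₁ - a₀)).const_add ((1 - z) * a₀))
    (Filter.eventually_of_mem (hU₁.mem_nhds hu₀) heqf)
  rw [hX', hY', cdot_fderiv_warpedSurface (hasDerivAt_cos _) ((hasDerivAt_sin _).const_mul b₂)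
      ((hasDerivAt_cos _).const_mul b₀) ((hasDerivAt_sin _).const_mul b₁),
    cdot_fderiv_warpedSurface_polar (hasDerivAt_cos _) hhd hfd hgd]
  have P₀ := sin_sq_add_cos_sq (u 0)
  have P₁ := sin_sq_add_cos_sq (u 1)
  set s₀ := sin (u 0)
  set c₀ := cos (u 0)
  set s₁ := sin (u 1)
  set c₁ := cos (u 1)
  have hE : deriv f (u 0) ^ 2 + f (u 0) ^ 2 * deriv g (u 0) ^ 2 = a₀ * s₀ ^ 2 + a₁ * c₀ ^ 2 := by
    linear_combination heqg (u 0) hu₀ - a₁ * P₀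
  have hF : f (u 0) * deriv f (u 0) = (a₁ - a₀) * s₀ * c₀ := by linear_combination hff / 2
  have hG : s₁ ^ 2 * f (u 0) ^ 2 + deriv h (u 1) ^ 2
      = s₁ ^ 2 * (a₀ * c₀ ^ 2 + a₁ * s₀ ^ 2) + a₂ * c₁ ^ 2 := by
    linear_combination s₁ ^ 2 * heqf (u 0) hu₀ + heqh (u 1) hu₁ - a₀ * s₁ ^ 2 * P₀ - a₂ * P₁
  linear_combination v 0 * w 0 * c₁ ^ 2 * (s₀ ^ 2 * hb₀ + c₀ ^ 2 * hb₁ - hE)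
    - (v 0 * w 1 + v 1 * w 0) * c₁ * s₁ * (s₀ * c₀ * (hb₁ - hb₀) - hF)
    + v 1 * w 1 * (s₁ ^ 2 * (c₀ ^ 2 * hb₀ + s₀ ^ 2 * hb₁) + c₁ ^ 2 * hb₂ - hG)

/-- Peterson's one-parameter family of deformations of the 2-dimensional
quadric `∑_{j=0}^{2} xⱼ²/aⱼ = 1`: `X` and `Y` have the same first fundamental form. -/
theorem stmt1 (a₀ a₁ a₂ b₀ b₁ b₂ : ℂ) (ha₀ : a₀ ≠ 0) (ha₁ : a₁ ≠ 0) (ha₂ : a₂ ≠ 0)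
    (hb₀ : b₀^2 = a₀) (hb₁ : b₁^2 = a₁) (hb₂ : b₂^2 = a₂) (z : ℂ)
    (U₁ U₂ : Set ℂ) (hU₁ : IsOpen U₁) (hU₂ : IsOpen U₂)
    (f g h : ℂ → ℂ)
    (hf : DifferentiableOn ℂ f U₁) (hg : DifferentiableOn ℂ g U₁)
    (hh : DifferentiableOn ℂ h U₂)
    (heqf : ∀ t ∈ U₁, (f t)^2 = (1 - z) * a₀ + (a₁ - a₀) * (Complex.sin t)^2)
    (heqg : ∀ t ∈ U₁, (deriv f t)^2 + (f t)^2 * (deriv g t)^2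
      = a₁ - (a₁ - a₀) * (Complex.sin t)^2)
    (heqh : ∀ t ∈ U₂, (deriv h t)^2 = a₂ - (a₂ - z * a₀) * (Complex.sin t)^2)
    (X Y : (Fin 2 → ℂ) → (Fin 3 → ℂ))
    (hX : X = fun u => ![b₀ * Complex.cos (u 1) * Complex.cos (u 0),
      b₁ * Complex.cos (u 1) * Complex.sin (u 0), b₂ * Complex.sin (u 1)])
    (hY : Y = fun u => ![Complex.cos (u 1) * f (u 0) * Complex.cos (g (u 0)),
      Complex.cos (u 1) * f (u 0) * Complex.sin (g (u 0)), h (u 1)]) :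
    ∀ u : Fin 2 → ℂ, u 0 ∈ U₁ → u 1 ∈ U₂ →
      ∀ v w : Fin 2 → ℂ,
        cdot (fderiv ℂ X u v) (fderiv ℂ X u w) = cdot (fderiv ℂ Y u v) (fderiv ℂ Y u w) :=
  stmt1_general a₀ a₁ a₂ b₀ b₁ b₂ hb₀ hb₁ hb₂ z U₁ U₂ hU₁ hU₂ f g h hf hg hh heqf heqg heqh X Y hX
    hY
end
end

section
/- Let a₀, a₁ be nonzero complex numbers and b₀, b₁ ∈ ℂ with b₀² = a₀, b₁² = a₁. Let U ⊆ ℂ be an open connected set containing 0 and let f, g : U → ℂ be differentiable with f nonvanishing, f(t)² = a₀cos²(t) + a₁sin²(t), f(t)²g′(t) = b₀b₁ for all t ∈ U, and f(0) = b₀, g(0) = 0. Then for all t ∈ U: f(t)cos(g(t)) = b₀cos(t) and f(t)sin(g(t)) = b₁sin(t). -/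
/-!
Write `u = b₀ cos t + i b₁ sin t` and `v = b₀ cos t - i b₁ sin t`, the light-cone coordinates
`x₀ ± i x₁` of the point `(b₀ cos t, b₁ sin t)` of the ellipse. Then `f² = u v`, and the Wronskian
`u' v - u v'` is the constant `2 i b₀ b₁`, which is `2 i f² g'`. These two identities make
`exp (i g) v / f` a holomorphic function with vanishing derivative; it equals `1` at `0`, hence on
the connected set `U`. So `f e^{-ig} = v`, and then `f e^{ig} = u` because `f² = u v`; taking half
sums and differences gives the two claimed identities.
-/

noncomputable section

open Complex Filter Topology

lemma two_mul_mul_deriv_of_sq_eventuallyEq {𝕜 : Type*} [NontriviallyNormedField 𝕜]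
    {f u v : 𝕜 → 𝕜} {t : 𝕜} (hf : DifferentiableAt 𝕜 f t) (hu : DifferentiableAt 𝕜 u t)
    (hv : DifferentiableAt 𝕜 v t) (hfuv : ∀ᶠ s in 𝓝 t, f s ^ 2 = u s * v s) :
    2 * f t * deriv f t = deriv u t * v t + u t * deriv v t := by
  have hsq : HasDerivAt (fun s => f s * f s) (deriv f t * f t + f t * deriv f t) t :=
    hf.hasDerivAt.mul hf.hasDerivAt
  have hprod : HasDerivAt (fun s => f s * f s) (deriv u t * v t + u t * deriv v t) t :=
    (hu.hasDerivAt.mul hv.hasDerivAt).congr_of_eventuallyEq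
      (hfuv.mono fun s hs => by simp only [Pi.mul_apply, ← hs]; ring)
  linear_combination hsq.unique hprod

theorem mul_cexp_eq_of_sq_eq_mul_of_wronskian {U : Set ℂ} (hU : IsOpen U)
    (hconn : IsPreconnected U) {t₀ : ℂ} (ht₀ : t₀ ∈ U) {f g u v : ℂ → ℂ} {c : ℂ}
    (hf : DifferentiableOn ℂ f U) (hg : DifferentiableOn ℂ g U)
    (hu : DifferentiableOn ℂ u U) (hv : DifferentiableOn ℂ v U)
    (hfne : ∀ t ∈ U, f t ≠ 0) (hfuv : ∀ t ∈ U, f t ^ 2 = u t * v t)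
    (hfg : ∀ t ∈ U, f t ^ 2 * deriv g t = c)
    (hW : ∀ t ∈ U, deriv u t * v t - u t * deriv v t = 2 * I * c)
    (h₀ : f t₀ * exp (g t₀ * I) = u t₀) :
    ∀ t ∈ U, f t * exp (g t * I) = u t ∧ f t * exp (-g t * I) = v t := by
  have hdiff : ∀ {φ : ℂ → ℂ}, DifferentiableOn ℂ φ U → ∀ t ∈ U, DifferentiableAt ℂ φ t :=
    fun hφ t ht => hφ.differentiableAt (hU.mem_nhds ht)
  have hvne : ∀ t ∈ U, v t ≠ 0 := fun t ht hv0 =>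
    pow_ne_zero 2 (hfne t ht) (by rw [hfuv t ht, hv0, mul_zero])
  set ψ : ℂ → ℂ := fun t => exp (g t * I) * v t / f t
  have hψ : ∀ t ∈ U, HasDerivAt ψ 0 t := by
    intro t ht
    have hff' := two_mul_mul_deriv_of_sq_eventuallyEq (hdiff hf t ht) (hdiff hu t ht)
      (hdiff hv t ht) (eventually_of_mem (hU.mem_nhds ht) hfuv)
    have h : HasDerivAt ψ (((exp (g t * I) * (deriv g t * I) * v t + exp (g t * I) * deriv v t)
        * f t - exp (g t * I) * v t * deriv f t) / f t ^ 2) t :=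
      (((hdiff hg t ht).hasDerivAt.mul_const I).cexp.fun_mul
        (hdiff hv t ht).hasDerivAt).fun_div (hdiff hf t ht).hasDerivAt (hfne t ht)
    -- the numerator times `f t` is `exp (g t * I) * v t * (I * c - (u' v - u v') / 2) = 0`
    have hnum : ((exp (g t * I) * (deriv g t * I) * v t + exp (g t * I) * deriv v t) * f t
        - exp (g t * I) * v t * deriv f t) * f t = 0 := by
      linear_combination (exp (g t * I) * v t * I) * hfg t ht
        + (exp (g t * I) * deriv v t) * hfuv t ht - (exp (g t * I) * v t / 2) * hff'
        - (exp (g t * I) * v t / 2) * hW t ht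
    rwa [(mul_eq_zero.1 hnum).resolve_right (hfne t ht), zero_div] at h
  have hψ_const : ∀ t ∈ U, ψ t = ψ t₀ := fun t ht =>
    hU.is_const_of_deriv_eq_zero hconn
      (fun s hs => (hψ s hs).differentiableAt.differentiableWithinAt)
      (fun s hs => (hψ s hs).deriv) ht ht₀
  have hψ₀ : ψ t₀ = 1 := by
    rw [div_eq_one_iff_eq (hfne t₀ ht₀)]
    refine mul_left_cancel₀ (hfne t₀ ht₀) ?_
    rw [← mul_assoc, h₀, ← hfuv t₀ ht₀, sq]
  intro t ht
  have hv_eq : exp (g t * I) * v t = f t := by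
    rw [← div_eq_one_iff_eq (hfne t ht)]
    exact (hψ_const t ht).trans hψ₀
  constructor
  · refine mul_right_cancel₀ (hvne t ht) ?_
    rw [← hfuv t ht, mul_assoc, hv_eq, sq]
  · rw [← hv_eq, mul_comm, ← mul_assoc, ← exp_add, neg_mul, neg_add_cancel, exp_zero, one_mul]

/-- The light-cone coordinate `x₀ + i x₁` of the point `(b₀ cos t, b₁ sin t)`; its partner
`x₀ - i x₁` is `ellipseChart b₀ (-b₁) t`. -/
def ellipseChart (b₀ b₁ t : ℂ) : ℂ := b₀ * cos t + b₁ * sin t * I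

lemma ellipseChart_mul_ellipseChart_neg (b₀ b₁ t : ℂ) :
    ellipseChart b₀ b₁ t * ellipseChart b₀ (-b₁) t = b₀ ^ 2 * cos t ^ 2 + b₁ ^ 2 * sin t ^ 2 := by
  unfold ellipseChart
  linear_combination (-(b₁ ^ 2 * sin t ^ 2)) * I_sq

lemma hasDerivAt_ellipseChart (b₀ b₁ t : ℂ) :
    HasDerivAt (ellipseChart b₀ b₁) (-(b₀ * sin t) + b₁ * cos t * I) t := by
  have h := ((hasDerivAt_cos t).const_mul b₀).fun_add
    (((hasDerivAt_sin t).const_mul b₁).mul_const I)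
  exact h.congr_deriv (by ring)

lemma differentiable_ellipseChart (b₀ b₁ : ℂ) : Differentiable ℂ (ellipseChart b₀ b₁) :=
  fun t => (hasDerivAt_ellipseChart b₀ b₁ t).differentiableAt

lemma wronskian_ellipseChart (b₀ b₁ t : ℂ) :
    deriv (ellipseChart b₀ b₁) t * ellipseChart b₀ (-b₁) t
      - ellipseChart b₀ b₁ t * deriv (ellipseChart b₀ (-b₁)) t = 2 * I * (b₀ * b₁) := by
  rw [(hasDerivAt_ellipseChart b₀ b₁ t).deriv, (hasDerivAt_ellipseChart b₀ (-b₁) t).deriv]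
  unfold ellipseChart
  linear_combination (2 * I * b₀ * b₁) * sin_sq_add_cos_sq t

theorem stmt3_general (a₀ a₁ b₀ b₁ : ℂ)
    (hb₀ : b₀^2 = a₀) (hb₁ : b₁^2 = a₁)
    (U : Set ℂ) (hU : IsOpen U) (hconn : IsConnected U) (h0U : (0 : ℂ) ∈ U)
    (f g : ℂ → ℂ) (hf : DifferentiableOn ℂ f U) (hg : DifferentiableOn ℂ g U)
    (hfne : ∀ t ∈ U, f t ≠ 0)
    (heqf : ∀ t ∈ U, (f t)^2 = a₀ * (Complex.cos t)^2 + a₁ * (Complex.sin t)^2)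
    (heqg : ∀ t ∈ U, (f t)^2 * deriv g t = b₀ * b₁)
    (hf0 : f 0 = b₀) (hg0 : g 0 = 0) :
    ∀ t ∈ U, f t * Complex.cos (g t) = b₀ * Complex.cos t ∧
      f t * Complex.sin (g t) = b₁ * Complex.sin t := by
  subst hb₀ hb₁
  have hfuv : ∀ t ∈ U, f t ^ 2 = ellipseChart b₀ b₁ t * ellipseChart b₀ (-b₁) t := fun t ht =>
    (heqf t ht).trans (ellipseChart_mul_ellipseChart_neg b₀ b₁ t).symm
  have h₀ : f 0 * exp (g 0 * I) = ellipseChart b₀ b₁ 0 := by simp [ellipseChart, hf0, hg0]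
  intro t ht
  obtain ⟨hplus, hminus⟩ := mul_cexp_eq_of_sq_eq_mul_of_wronskian hU hconn.isPreconnected h0U
    hf hg (differentiable_ellipseChart b₀ b₁).differentiableOn
    (differentiable_ellipseChart b₀ (-b₁)).differentiableOn hfne hfuv heqg
    (fun t _ => wronskian_ellipseChart b₀ b₁ t) h₀ t ht
  rw [← cos_add_sin_I] at hplus
  rw [← cos_sub_sin_I] at hminus
  unfold ellipseChart at hplus hminus
  constructor
  · linear_combination (hplus + hminus) / 2
  · linear_combination (-I / 2) * (hplus - hminus)
      + (f t * sin (g t) - b₁ * sin t) * I_sq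

/-- the `z = 0` specialization identity in Peterson's family:
`(f cos g, f sin g)` recovers the spherical-coordinate parametrization `(b₀ cos, b₁ sin)`
of the ellipse `x₀²/a₀ + x₁²/a₁ = 1`. -/
theorem stmt3 (a₀ a₁ b₀ b₁ : ℂ) (ha₀ : a₀ ≠ 0) (ha₁ : a₁ ≠ 0)
    (hb₀ : b₀^2 = a₀) (hb₁ : b₁^2 = a₁)
    (U : Set ℂ) (hU : IsOpen U) (hconn : IsConnected U) (h0U : (0 : ℂ) ∈ U)
    (f g : ℂ → ℂ) (hf : DifferentiableOn ℂ f U) (hg : DifferentiableOn ℂ g U)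
    (hfne : ∀ t ∈ U, f t ≠ 0)
    (heqf : ∀ t ∈ U, (f t)^2 = a₀ * (Complex.cos t)^2 + a₁ * (Complex.sin t)^2)
    (heqg : ∀ t ∈ U, (f t)^2 * deriv g t = b₀ * b₁)
    (hf0 : f 0 = b₀) (hg0 : g 0 = 0) :
    ∀ t ∈ U, f t * Complex.cos (g t) = b₀ * Complex.cos t ∧
      f t * Complex.sin (g t) = b₁ * Complex.sin t :=
  stmt3_general a₀ a₁ b₀ b₁ hb₀ hb₁ U hU hconn h0U f g hf hg hfne heqf heqg hf0 hg0
end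
end

section
/- Let n ≥ 2, let a₀,…,aₙ be nonzero complex numbers, bⱼ ∈ ℂ with bⱼ² = aⱼ, and let X be the spherical-coordinate parametrization of the quadric. Then (u¹,…,uⁿ) is a conjugate system with the stated relation: for all 1 ≤ k < j ≤ n and all u ∈ ℂⁿ with cos(uʲ) ≠ 0, ∂ₖ∂ⱼX(u) = −tan(uʲ)·∂ₖX(u), where ∂ⱼ denotes the directional derivative along the j-th standard basis vector of ℂⁿ. -/
noncomputable section

open Complex Finset

/-- Directional (partial) derivative along the j-th standard basis vector of ℂⁿ. -/
def pd {n m : ℕ} (j : Fin n) (F : (Fin n → ℂ) → (Fin m → ℂ)) :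
    (Fin n → ℂ) → (Fin m → ℂ) :=
  fun u => fderiv ℂ F u (Pi.single j 1)

/-!
Fix `k < j`. The components `X₀, …, X_{j-1}` all contain the factor `cos uʲ`, while
`Xⱼ, …, Xₙ` involve only `uʲ, …, uⁿ`. Hence `X = cos uʲ • Y + Z` with `Y` independent of `uʲ`
and `Z` independent of `uᵏ`. Then `∂ⱼX = -sin uʲ • Y + ∂ⱼZ` with `∂ⱼZ` still independent of `uᵏ`,
so `∂ₖ∂ⱼX = -sin uʲ • ∂ₖY` while `∂ₖX = cos uʲ • ∂ₖY`.
-/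

open Function

theorem differentiable_update_const {ι 𝕜 : Type*} [Fintype ι] [DecidableEq ι]
    [NontriviallyNormedField 𝕜] (j : ι) (c : 𝕜) :
    Differentiable 𝕜 (fun u : ι → 𝕜 => update u j c) :=
  differentiable_pi.2 fun i => by
    simp only [update_apply]
    split_ifs <;> fun_prop

section PartialDerivative

variable {n m : ℕ} {F Y Z : (Fin n → ℂ) → Fin m → ℂ} {u : Fin n → ℂ} {j k : Fin n}

theorem hasDerivAt_update_pd (hF : DifferentiableAt ℂ F u) :
    HasDerivAt (fun t => F (update u j t)) (pd j F u) (u j) :=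
  HasFDerivAt.comp_hasDerivAt_of_eq (u j) hF.hasFDerivAt (hasDerivAt_update u j (u j))
    (update_eq_self j u).symm

theorem pd_eq_of_hasDerivAt {g : Fin m → ℂ} (hF : DifferentiableAt ℂ F u)
    (h : HasDerivAt (fun t => F (update u j t)) g (u j)) : pd j F u = g :=
  (hasDerivAt_update_pd hF).unique h

theorem differentiable_pd (hF : ContDiff ℂ 2 F) : Differentiable ℂ (pd j F) :=
  ((hF.fderiv_right (m := 1) (by norm_num)).differentiable one_ne_zero).clm_apply
    (differentiable_const _)

theorem smul_pd_pd_eq_deriv_smul_pd {φ : ℂ → ℂ} (hkj : k ≠ j) (hF : ContDiff ℂ 2 F)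
    (hφ : Differentiable ℂ φ) (hY : Differentiable ℂ Y) (hFYZ : ∀ v, F v = φ (v j) • Y v + Z v)
    (hYj : ∀ v t, Y (update v j t) = Y v) (hZk : ∀ v t, Z (update v k t) = Z v) :
    φ (u j) • pd k (pd j F) u = deriv φ (u j) • pd k F u := by
  have hF1 : Differentiable ℂ F := hF.differentiable (by norm_num)
  have hkF : pd k F u = φ (u j) • pd k Y u := by
    refine pd_eq_of_hasDerivAt (hF1 u) ?_
    have h := ((hasDerivAt_update_pd (j := k) (hY u)).const_smul (φ (u j))).add_const (Z u)
    refine h.congr_of_eventuallyEq (.of_forall fun t => ?_)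
    simp only [hFYZ, hZk, update_of_ne hkj.symm, Pi.smul_apply]
  have hjF : ∀ t, pd j F (update u k t)
      = deriv φ (u j) • Y (update u k t) + (pd j F u - deriv φ (u j) • Y u) := by
    intro t
    set w := update u k t
    have hw : w j = u j := update_of_ne hkj.symm _ _
    refine pd_eq_of_hasDerivAt (hF1 w) ?_
    have h := (((hφ (u j)).hasDerivAt.smul_const (Y w)).add
      (hasDerivAt_update_pd (j := j) (hF1 u))).sub ((hφ (u j)).hasDerivAt.smul_const (Y u))
    rw [hw, ← add_sub_assoc]
    refine h.congr_of_eventuallyEq (.of_forall fun s => ?_)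
    simp only [Pi.add_apply, Pi.sub_apply, hFYZ, hYj, update_self, w]
    rw [update_comm hkj t s u, hZk]
    abel
  have hkjF : pd k (pd j F) u = deriv φ (u j) • pd k Y u := by
    refine pd_eq_of_hasDerivAt (differentiable_pd hF u) ?_
    have h := ((hasDerivAt_update_pd (j := k) (hY u)).const_smul (deriv φ (u j))).add_const
      (pd j F u - deriv φ (u j) • Y u)
    exact h.congr_of_eventuallyEq (.of_forall hjF)
  rw [hkjF, hkF, smul_comm]

end PartialDerivative

section SphericalParametrization

variable {n : ℕ} (b : Fin (n+1) → ℂ)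

theorem Cprod_update_of_lt {k : ℕ} (u : Fin n → ℂ) {l : Fin n} (hl : (l : ℕ) < k) (t : ℂ) :
    Cprod n k (update u l t) = Cprod n k u :=
  prod_congr rfl fun i hi => by
    rw [update_of_ne]
    rintro rfl
    exact absurd (mem_filter.1 hi).2 (not_le.2 hl)

theorem Cprod_eq_cos_mul_update {k : ℕ} (u : Fin n → ℂ) {l : Fin n} (hl : k ≤ (l : ℕ)) :
    Cprod n k u = cos (u l) * Cprod n k (update u l 0) := by
  have hmem : l ∈ univ.filter (fun i : Fin n => k ≤ (i : ℕ)) := mem_filter.2 ⟨mem_univ l, hl⟩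
  simp only [Cprod, ← mul_prod_erase _ _ hmem, update_self, cos_zero, one_mul]
  congr 1
  exact prod_congr rfl fun i hi => by rw [update_of_ne (ne_of_mem_erase hi)]

theorem contDiff_sphX (r : WithTop ℕ∞) : ContDiff ℂ r (sphX n b) := by
  refine contDiff_pi.2 fun i => ?_
  induction i using Fin.cases <;> simp only [sphX, Cprod, Fin.cons_zero, Fin.cons_succ] <;> fun_prop

theorem sphX_update_of_succ_lt (u : Fin n → ℂ) {i : Fin (n+1)} {l : Fin n}
    (h : (l : ℕ) + 1 < i) (t : ℂ) : sphX n b (update u l t) i = sphX n b u i := by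
  induction i using Fin.cases with
  | zero => exact absurd h (by simp)
  | succ m =>
    have hlm : (l : ℕ) < m := by simpa using h
    simp only [sphX, Fin.cons_succ, Cprod_update_of_lt u (Nat.lt_succ_of_lt hlm),
      update_of_ne (Fin.ne_of_lt hlm).symm]

theorem sphX_eq_cos_mul_update (u : Fin n → ℂ) {i : Fin (n+1)} {l : Fin n}
    (h : (i : ℕ) ≤ l) : sphX n b u i = cos (u l) * sphX n b (update u l 0) i := by
  induction i using Fin.cases with
  | zero =>
    simp only [sphX, Fin.cons_zero, Cprod_eq_cos_mul_update u (Nat.zero_le l)]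
    ring
  | succ m =>
    have hml : m < l := by simpa using h
    simp only [sphX, Fin.cons_succ]
    rw [Cprod_eq_cos_mul_update u hml, update_of_ne (Fin.ne_of_lt hml)]
    ring

theorem cos_smul_pd_pd_sphX {j k : Fin n} (hkj : k < j) (u : Fin n → ℂ) :
    cos (u j) • pd k (pd j (sphX n b)) u = -sin (u j) • pd k (sphX n b) u := by
  rw [← Complex.deriv_cos]
  refine smul_pd_pd_eq_deriv_smul_pd
    (Y := fun v i => if (i : ℕ) ≤ j then sphX n b (update v j 0) i else 0)
    (Z := fun v i => if (i : ℕ) ≤ j then 0 else sphX n b v i)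
    hkj.ne (contDiff_sphX b 2) differentiable_cos ?_ ?_ ?_ ?_
  · have hX₀ := ((contDiff_sphX b 1).differentiable one_ne_zero).comp
      (differentiable_update_const j (0 : ℂ))
    exact differentiable_pi.2 fun i => by
      split_ifs
      · exact differentiable_pi.1 hX₀ i
      · exact differentiable_const 0
  · intro v
    funext i
    simp only [Pi.add_apply, Pi.smul_apply, smul_eq_mul]
    split_ifs with h
    · rw [sphX_eq_cos_mul_update b v h, add_zero]
    · rw [mul_zero, zero_add]
  · intro v t
    simp only [update_idem]
  · intro v t
    funext i
    split_ifs with h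
    · rfl
    · exact sphX_update_of_succ_lt b v (by omega) t

end SphericalParametrization

theorem stmt4_general (n : ℕ) (b : Fin (n+1) → ℂ) :
    ∀ j k : Fin n, k < j → ∀ u : Fin n → ℂ, Complex.cos (u j) ≠ 0 →
      pd k (pd j (sphX n b)) u = (-Complex.tan (u j)) • pd k (sphX n b) u := by
  intro j k hkj u hc
  rw [← inv_smul_smul₀ hc (pd k (pd j (sphX n b)) u), cos_smul_pd_pd_sphX b hkj u, smul_smul,
    tan_eq_sin_div_cos, div_eq_inv_mul, mul_neg]

/-- `(u¹,…,uⁿ)` is a conjugate system on the quadric: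
`∂ₖ∂ⱼX(u) = −tan(uʲ)·∂ₖX(u)` for `k < j` wherever `cos(uʲ) ≠ 0`. -/
theorem stmt4 (n : ℕ) (hn : 2 ≤ n) (a b : Fin (n+1) → ℂ)
    (ha : ∀ j, a j ≠ 0) (hb : ∀ j, (b j)^2 = a j) :
    ∀ j k : Fin n, k < j → ∀ u : Fin n → ℂ, Complex.cos (u j) ≠ 0 →
      pd k (pd j (sphX n b)) u = (-Complex.tan (u j)) • pd k (sphX n b) u :=
  stmt4_general n b
end
end

section
/- Let n ≥ 2, let U₁,…,Uₙ ⊆ ℂ be open, and let f₁,…,f_{n-1}, g₁,…,g_{n-1} : Uₖ → ℂ and h : Uₙ → ℂ be twice differentiable functions. Then for the map Y, the coordinates (u¹,…,uⁿ) form a conjugate system: for all 1 ≤ k < j ≤ n and all u ∈ U₁×⋯×Uₙ with cos(uʲ) ≠ 0, ∂ₖ∂ⱼY(u) = −tan(uʲ)·∂ₖY(u), where ∂ⱼ denotes the directional derivative along the j-th standard basis vector of ℂⁿ. -/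
noncomputable section

open Complex Finset

/-!
Each coordinate of `Y` is a sum of separated products `∏ₗ φₗ(uˡ)`: the `t`-th summand has the
factor `1` before position `t`, a function of `uᵗ` alone at `t`, and `cos` after `t`.
For `k < j`, a summand with `t < j` carries the factor `cos uʲ`, so `∂ⱼ` multiplies it by
`-tan uʲ`, and this commutes with `∂ₖ`; a summand with `t ≥ j` has a constant factor at `k` and is
killed by `∂ₖ`. Complex differentiability on open sets makes every factor holomorphic, so these
sums can be differentiated termwise twice.
-/

section SepProd

variable {𝕜 : Type*} [NontriviallyNormedField 𝕜] {n : ℕ}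

def sepProd (φ : Fin n → 𝕜 → 𝕜) (u : Fin n → 𝕜) : 𝕜 := ∏ l, φ l (u l)

def derivFactor (j : Fin n) (φ : Fin n → 𝕜 → 𝕜) : Fin n → 𝕜 → 𝕜 :=
  Function.update φ j (deriv (φ j))

lemma sepProd_eq_mul_prod_erase (φ : Fin n → 𝕜 → 𝕜) (j : Fin n) (u : Fin n → 𝕜) :
    sepProd φ u = φ j (u j) * ∏ l ∈ univ.erase j, φ l (u l) :=
  (mul_prod_erase _ _ (mem_univ j)).symm

lemma sepProd_update (φ : Fin n → 𝕜 → 𝕜) (j : Fin n) (ψ : 𝕜 → 𝕜) (u : Fin n → 𝕜) :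
    sepProd (Function.update φ j ψ) u = ψ (u j) * ∏ l ∈ univ.erase j, φ l (u l) := by
  rw [sepProd_eq_mul_prod_erase _ j, Function.update_self]
  congr 1
  exact prod_congr rfl fun l hl => by rw [Function.update_of_ne (ne_of_mem_erase hl)]

lemma hasFDerivAt_sepProd {φ : Fin n → 𝕜 → 𝕜} {u : Fin n → 𝕜}
    (hφ : ∀ l, DifferentiableAt 𝕜 (φ l) (u l)) :
    HasFDerivAt (sepProd φ)
      (∑ l, sepProd (derivFactor l φ) u •
        (ContinuousLinearMap.proj l : (Fin n → 𝕜) →L[𝕜] 𝕜)) u := by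
  have hfactor (l : Fin n) : HasFDerivAt (fun v : Fin n → 𝕜 => φ l (v l))
      (deriv (φ l) (u l) • (ContinuousLinearMap.proj l : (Fin n → 𝕜) →L[𝕜] 𝕜)) u := by
    refine ((hφ l).hasDerivAt.hasFDerivAt.comp u (hasFDerivAt_apply l u)).congr_fderiv ?_
    ext v
    simp [mul_comm]
  refine (HasFDerivAt.finsetProd (u := univ) fun l _ => hfactor l).congr_fderiv
    (sum_congr rfl fun l _ => ?_)
  rw [smul_smul, derivFactor, sepProd_update, mul_comm]

lemma sepProd_derivFactor_derivFactor_of_deriv_eq_mul {φ : Fin n → 𝕜 → 𝕜} {u : Fin n → 𝕜}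
    {j k : Fin n} (hkj : k ≠ j) {c : 𝕜} (hc : deriv (φ j) (u j) = c * φ j (u j)) :
    sepProd (derivFactor k (derivFactor j φ)) u = c * sepProd (derivFactor k φ) u := by
  have hcomm : derivFactor k (derivFactor j φ) =
      Function.update (derivFactor k φ) j (deriv (φ j)) := by
    rw [derivFactor, derivFactor, derivFactor, Function.update_of_ne hkj,
      Function.update_comm hkj]
  have hj : derivFactor k φ j = φ j := Function.update_of_ne hkj.symm _ _
  rw [hcomm, sepProd_update, hc, sepProd_eq_mul_prod_erase (derivFactor k φ) j, hj]
  ring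

lemma sepProd_derivFactor_of_eq_const {φ : Fin n → 𝕜 → 𝕜} {k : Fin n} {c : 𝕜}
    (hk : φ k = fun _ => c) (u : Fin n → 𝕜) : sepProd (derivFactor k φ) u = 0 := by
  rw [derivFactor, sepProd_update, hk, deriv_const', zero_mul]

end SepProd

section PartialDerivatives

variable {n p q : ℕ}

lemma differentiableOn_derivFactor {φ : Fin n → ℂ → ℂ} {O : Fin n → Set ℂ}
    (hO : ∀ l, IsOpen (O l)) (hφ : ∀ l, DifferentiableOn ℂ (φ l) (O l)) (j l : Fin n) :
    DifferentiableOn ℂ (derivFactor j φ l) (O l) := by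
  rcases eq_or_ne l j with rfl | hlj
  · rw [derivFactor, Function.update_self]
    exact (hφ l).deriv (hO l)
  · rw [derivFactor, Function.update_of_ne hlj]
    exact hφ l

lemma pd_sum_sepProd (ξ : Fin p → Fin q → Fin n → ℂ → ℂ) {u : Fin n → ℂ}
    (hξ : ∀ i t l, DifferentiableAt ℂ (ξ i t l) (u l)) (j : Fin n) :
    pd j (fun v i => ∑ t, sepProd (ξ i t) v) u =
      fun i => ∑ t, sepProd (derivFactor j (ξ i t)) u := by
  have hderiv : HasFDerivAt (fun v (i : Fin p) => ∑ t, sepProd (ξ i t) v)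
      (ContinuousLinearMap.pi fun i => ∑ t, ∑ l, sepProd (derivFactor l (ξ i t)) u •
        (ContinuousLinearMap.proj l : (Fin n → ℂ) →L[ℂ] ℂ)) u :=
    hasFDerivAt_pi.2 fun i => HasFDerivAt.fun_sum fun t _ => hasFDerivAt_sepProd (hξ i t)
  funext i
  simp [pd, hderiv.fderiv, Pi.single_apply]

lemma pd_pd_sum_sepProd (ξ : Fin p → Fin q → Fin n → ℂ → ℂ) {O : Fin n → Set ℂ}
    (hO : ∀ l, IsOpen (O l)) (hξ : ∀ i t l, DifferentiableOn ℂ (ξ i t l) (O l))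
    {u : Fin n → ℂ} (hu : ∀ l, u l ∈ O l) (j k : Fin n) :
    pd k (pd j (fun v i => ∑ t, sepProd (ξ i t) v)) u =
      fun i => ∑ t, sepProd (derivFactor k (derivFactor j (ξ i t))) u := by
  have hbox : Set.univ.pi O ∈ nhds u :=
    (isOpen_set_pi Set.finite_univ fun l _ => hO l).mem_nhds fun l _ => hu l
  have hfirst : pd j (fun v i => ∑ t, sepProd (ξ i t) v) =ᶠ[nhds u]
      fun v i => ∑ t, sepProd (derivFactor j (ξ i t)) v :=
    Filter.eventually_of_mem hbox fun v hv => pd_sum_sepProd ξ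
      (fun i t l => (hξ i t l).differentiableAt ((hO l).mem_nhds (hv l trivial))) j
  rw [pd, hfirst.fderiv_eq]
  exact pd_sum_sepProd _ (fun i t l =>
    (differentiableOn_derivFactor hO (hξ i t) j l).differentiableAt ((hO l).mem_nhds (hu l))) k

end PartialDerivatives

section PetY

variable {m : ℕ} (f g : Fin m → ℂ → ℂ) (h : ℂ → ℂ)

def petProfile (i : Fin (2*m+1)) : Fin (m+1) → ℂ → ℂ :=
  Fin.lastCases (fun x => (if (i : ℕ) = 2*m then 1 else 0) * h x)
    fun k x => f k x *
      ((if (i : ℕ) = 2*k.val then 1 else 0) * Complex.cos (g k x) +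
       (if (i : ℕ) = 2*k.val + 1 then 1 else 0) * Complex.sin (g k x))

def petFactor (i : Fin (2*m+1)) (t l : Fin (m+1)) : ℂ → ℂ :=
  if l < t then fun _ => 1 else if l = t then petProfile f g h i t else Complex.cos

variable {f g h} {i : Fin (2*m+1)}

lemma petFactor_of_lt {t l : Fin (m+1)} (hlt : l < t) : petFactor f g h i t l = fun _ => 1 :=
  if_pos hlt

lemma petFactor_self (t : Fin (m+1)) : petFactor f g h i t t = petProfile f g h i t := by
  simp [petFactor]

lemma petFactor_of_gt {t l : Fin (m+1)} (htl : t < l) : petFactor f g h i t l = Complex.cos := by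
  simp [petFactor, htl.not_gt, htl.ne']

lemma sepProd_petFactor (t : Fin (m+1)) (u : Fin (m+1) → ℂ) :
    sepProd (petFactor f g h i t) u = petProfile f g h i t (u t) * Cprod (m+1) (t + 1) u := by
  rw [sepProd_eq_mul_prod_erase _ t, petFactor_self, Cprod, prod_filter]
  congr 1
  rw [eq_comm, ← prod_erase (a := t) _ (if_neg (Nat.not_succ_le_self t))]
  refine prod_congr rfl fun l hl => ?_
  rcases lt_or_gt_of_ne (ne_of_mem_erase hl) with hlt | hgt
  · rw [petFactor_of_lt hlt, if_neg (by omega)]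
  · rw [petFactor_of_gt hgt, if_pos (by omega)]

lemma petY_eq_sum_sepProd :
    petY m f g h = fun u i => ∑ t, sepProd (petFactor f g h i t) u := by
  funext u i
  have hlast : Cprod (m+1) (m+1) u = 1 :=
    prod_eq_one fun l hl => absurd (mem_filter.1 hl).2 (not_le.2 l.isLt)
  simp only [petY, Fin.sum_univ_castSucc, sepProd_petFactor, petProfile, Fin.lastCases_castSucc,
    Fin.lastCases_last, Fin.val_castSucc, Fin.val_last, hlast, mul_one]
  exact congrArg (· + _) (sum_congr rfl fun k _ => mul_rotate _ _ _)

lemma differentiableOn_petFactor {U : Fin (m+1) → Set ℂ}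
    (hf : ∀ k : Fin m, DifferentiableOn ℂ (f k) (U k.castSucc))
    (hg : ∀ k : Fin m, DifferentiableOn ℂ (g k) (U k.castSucc))
    (hh : DifferentiableOn ℂ h (U (Fin.last m))) (i : Fin (2*m+1)) (t l : Fin (m+1)) :
    DifferentiableOn ℂ (petFactor f g h i t l) (U l) := by
  rcases lt_trichotomy l t with hlt | rfl | hgt
  · rw [petFactor_of_lt hlt]
    exact differentiableOn_const 1
  · rw [petFactor_self]
    induction l using Fin.lastCases with
    | last => simp only [petProfile, Fin.lastCases_last]; fun_prop
    | cast k => simp only [petProfile, Fin.lastCases_castSucc]; fun_prop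
  · rw [petFactor_of_gt hgt]
    exact differentiable_cos.differentiableOn

lemma sepProd_derivFactor_derivFactor_petFactor {j k : Fin (m+1)} (hkj : k < j)
    {u : Fin (m+1) → ℂ} (hcos : Complex.cos (u j) ≠ 0) (t : Fin (m+1)) :
    sepProd (derivFactor k (derivFactor j (petFactor f g h i t))) u =
      -Complex.tan (u j) * sepProd (derivFactor k (petFactor f g h i t)) u := by
  rcases lt_or_ge t j with htj | hjt
  · refine sepProd_derivFactor_derivFactor_of_deriv_eq_mul hkj.ne ?_
    rw [petFactor_of_gt htj, deriv_cos', neg_mul, tan_mul_cos hcos]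
  · have hk : petFactor f g h i t k = fun _ => 1 := petFactor_of_lt (hkj.trans_le hjt)
    have hk' : derivFactor j (petFactor f g h i t) k = fun _ => 1 := by
      rw [derivFactor, Function.update_of_ne hkj.ne, hk]
    rw [sepProd_derivFactor_of_eq_const hk', sepProd_derivFactor_of_eq_const hk, mul_zero]

end PetY

theorem stmt5_general (m : ℕ)
    (U : Fin (m+1) → Set ℂ) (hU : ∀ k, IsOpen (U k))
    (f g : Fin m → ℂ → ℂ) (h : ℂ → ℂ)
    (hf : ∀ k : Fin m, DifferentiableOn ℂ (f k) (U k.castSucc))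
    (hg : ∀ k : Fin m, DifferentiableOn ℂ (g k) (U k.castSucc))
    (hh : DifferentiableOn ℂ h (U (Fin.last m))) :
    ∀ j k : Fin (m+1), k < j → ∀ u : Fin (m+1) → ℂ, (∀ l, u l ∈ U l) →
      Complex.cos (u j) ≠ 0 →
      pd k (pd j (petY m f g h)) u = (-Complex.tan (u j)) • pd k (petY m f g h) u := by
  intro j k hkj u hu hcos
  have hfactor := differentiableOn_petFactor hf hg hh
  rw [petY_eq_sum_sepProd, pd_pd_sum_sepProd _ hU hfactor hu,
    pd_sum_sepProd _ fun i t l => (hfactor i t l).differentiableAt ((hU l).mem_nhds (hu l))]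
  funext i
  simp only [Pi.smul_apply, smul_eq_mul, mul_sum]
  exact sum_congr rfl fun t _ => sepProd_derivFactor_derivFactor_petFactor hkj hcos t

/-- `(u¹,…,uⁿ)` is a conjugate system on `Y` (here `n = m+1 ≥ 2`):
`∂ₖ∂ⱼY(u) = −tan(uʲ)·∂ₖY(u)` for `k < j` wherever `cos(uʲ) ≠ 0`. -/
theorem stmt5 (m : ℕ) (hm : 1 ≤ m)
    (U : Fin (m+1) → Set ℂ) (hU : ∀ k, IsOpen (U k))
    (f g : Fin m → ℂ → ℂ) (h : ℂ → ℂ)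
    (hf : ∀ k : Fin m, DifferentiableOn ℂ (f k) (U k.castSucc))
    (hf' : ∀ k : Fin m, DifferentiableOn ℂ (deriv (f k)) (U k.castSucc))
    (hg : ∀ k : Fin m, DifferentiableOn ℂ (g k) (U k.castSucc))
    (hg' : ∀ k : Fin m, DifferentiableOn ℂ (deriv (g k)) (U k.castSucc))
    (hh : DifferentiableOn ℂ h (U (Fin.last m)))
    (hh' : DifferentiableOn ℂ (deriv h) (U (Fin.last m))) :
    ∀ j k : Fin (m+1), k < j → ∀ u : Fin (m+1) → ℂ, (∀ l, u l ∈ U l) →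
      Complex.cos (u j) ≠ 0 →
      pd k (pd j (petY m f g h)) u = (-Complex.tan (u j)) • pd k (petY m f g h) u :=
  stmt5_general m U hU f g h hf hg hh
end
end

section
/- Let n ≥ 2. For j = 1,…,n let hⱼ⁰ ∈ ℂ and wⱼ ∈ ℂⁿ⁻¹, and suppose the Gauß equations hold: hⱼ⁰hₖ⁰ = ⟨wⱼ, wₖ⟩ for all j ≠ k. Set hⱼ := (i·hⱼ⁰, wⱼ) ∈ ℂⁿ. Then the vectors hⱼ are pairwise orthogonal for the complex bilinear dot product: ⟨hⱼ, hₖ⟩ = 0 for j ≠ k; and if moreover h₁,…,hₙ are linearly independent, then each hⱼ is non-isotropic: ⟨hⱼ, hⱼ⟩ ≠ 0 for every j. -/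
noncomputable section

open Complex Finset

open Matrix

lemma cdot_eq_dotProduct {m : ℕ} (x y : Fin m → ℂ) : cdot x y = x ⬝ᵥ y := rfl

lemma dotProduct_I_mul_cons {m : ℕ} (a b : ℂ) (x y : Fin m → ℂ) :
    (Fin.cons (I * a) x : Fin (m + 1) → ℂ) ⬝ᵥ Fin.cons (I * b) y = x ⬝ᵥ y - a * b := by
  rw [← vecCons, ← vecCons, cons_dotProduct_cons]
  linear_combination a * b * I_sq

lemma eq_zero_of_dotProduct_eq_zero_of_span_eq_top {R ι n : Type*} [CommSemiring R] [Fintype n]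
    {v : ι → n → R} (hv : Submodule.span R (Set.range v) = ⊤) {x : n → R}
    (hx : ∀ i, x ⬝ᵥ v i = 0) : x = 0 := by
  have h : dotProductBilin R R x = 0 := LinearMap.ext_on_range hv hx
  exact dotProduct_eq_zero x fun y => LinearMap.congr_fun h y

/-- An isotropic member would be orthogonal to the whole space, which the dot product forbids. -/
lemma LinearIndependent.dotProduct_self_ne_zero {K ι n : Type*} [Field K] [Fintype ι]
    [Fintype n] {v : ι → n → K} (hli : LinearIndependent K v)
    (hcard : Fintype.card ι = Fintype.card n) (horth : Pairwise fun j k => v j ⬝ᵥ v k = 0)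
    (j : ι) : v j ⬝ᵥ v j ≠ 0 := by
  intro hiso
  have hspan : Submodule.span K (Set.range v) = ⊤ :=
    hli.span_eq_top_of_card_eq_finrank' (by simpa using hcard)
  refine hli.ne_zero j (eq_zero_of_dotProduct_eq_zero_of_span_eq_top hspan fun k => ?_)
  obtain rfl | hjk := eq_or_ne j k
  exacts [hiso, horth hjk]

/-- with `n = m+2 ≥ 2`, if the Gauß equations `hⱼ⁰hₖ⁰ = ⟨wⱼ, wₖ⟩` hold
for `j ≠ k`, then the joined vectors `hⱼ = (i·hⱼ⁰, wⱼ) ∈ ℂⁿ` are pairwise orthogonal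
for the complex bilinear dot product, and if they are moreover linearly independent
then each is non-isotropic. -/
theorem stmt8 (m : ℕ) (h0 : Fin (m+2) → ℂ) (w : Fin (m+2) → Fin (m+1) → ℂ)
    (hGauss : ∀ j k, j ≠ k → h0 j * h0 k = cdot (w j) (w k))
    (H : Fin (m+2) → Fin (m+2) → ℂ)
    (hH : ∀ j, H j = Fin.cons (Complex.I * h0 j) (w j)) :
    (∀ j k, j ≠ k → cdot (H j) (H k) = 0) ∧
    (LinearIndependent ℂ H → ∀ j, cdot (H j) (H j) ≠ 0) := by
  have horth : ∀ j k, j ≠ k → cdot (H j) (H k) = 0 := fun j k hjk => by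
    rw [cdot_eq_dotProduct, hH, hH, dotProduct_I_mul_cons, ← cdot_eq_dotProduct, hGauss j k hjk,
      sub_self]
  exact ⟨horth, fun hli => hli.dotProduct_self_ne_zero rfl horth⟩
end
end

section
/- Let n ≥ 3, p ≥ 1, let U ⊆ ℂⁿ be open, and let hⱼ^α : U → ℂ (1 ≤ j ≤ n, 1 ≤ α ≤ p), Γˡ_{jk} : U → ℂ and η^α_{βl} : U → ℂ be differentiable functions with η^α_{βl} = −η^β_{αl}. Define R_{jkjk} := ∑_{α=1}^{p} hⱼ^α hₖ^α. Assume the Codazzi–Mainardi–Peterson equations: ∂ₗhⱼ^α = Γʲ_{jl}hⱼ^α − Γˡ_{jj}hₗ^α − ∑_β hⱼ^β η^α_{βl} for all j ≠ l and all α. Then for all distinct j, k, l: ∂ₗR_{jkjk} = (Γʲ_{jl} + Γᵏ_{kl})·R_{jkjk} − Γˡ_{kk}·R_{jljl} − Γˡ_{jj}·R_{klkl}, where ∂ₗ denotes the directional derivative along the l-th standard basis vector of ℂⁿ. -/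
/-!
By the product rule, `∂ₗR_{jkjk} = ∑_α (hⱼ^α ∂ₗhₖ^α + hₖ^α ∂ₗhⱼ^α)`. Substituting the
Codazzi–Mainardi–Peterson equations, the Γ-terms regroup into the curvature terms `R`, while the
normal-connection terms form `∑_{α,β} (hⱼ^α hₖ^β + hₖ^α hⱼ^β) η^α_{βl}`, a symmetric tensor paired
with one antisymmetric in `α, β`, hence zero.
-/

noncomputable section

open Complex Finset

/-- Directional (partial) derivative of a scalar function on ℂⁿ along the
l-th standard basis vector. -/
def pdS {n : ℕ} (l : Fin n) (F : (Fin n → ℂ) → ℂ) : (Fin n → ℂ) → ℂ :=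
  fun u => fderiv ℂ F u (Pi.single l 1)

lemma pdS_sum_mul {n : ℕ} {ι : Type*} [Fintype ι] (l : Fin n)
    (f g : ι → (Fin n → ℂ) → ℂ) (u : Fin n → ℂ)
    (hf : ∀ α, DifferentiableAt ℂ (f α) u) (hg : ∀ α, DifferentiableAt ℂ (g α) u) :
    pdS l (fun v => ∑ α, f α v * g α v) u
      = ∑ α, (f α u * pdS l (g α) u + g α u * pdS l (f α) u) := by
  have hsum : HasFDerivAt (fun v => ∑ α, f α v * g α v)
      (∑ α, (f α u • fderiv ℂ (g α) u + g α u • fderiv ℂ (f α) u)) u :=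
    HasFDerivAt.fun_sum fun α _ => (hf α).hasFDerivAt.mul (hg α).hasFDerivAt
  simp only [pdS, hsum.fderiv, _root_.sum_apply, add_apply, smul_apply, smul_eq_mul]

lemma sum_mul_sum_add_mul_sum_of_antisymm {R ι : Type*} [CommRing R] [Fintype ι]
    (a b : ι → R) (η : ι → ι → R) (hη : ∀ α β, η α β = -η β α) :
    ∑ α, (a α * ∑ β, b β * η α β + b α * ∑ β, a β * η α β) = 0 := by
  have hswap : ∑ α, b α * ∑ β, a β * η α β = -∑ α, a α * ∑ β, b β * η α β := by
    simp only [mul_sum, ← sum_neg_distrib]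
    rw [sum_comm]
    refine sum_congr rfl fun α _ => sum_congr rfl fun β _ => ?_
    rw [hη β α]
    ring
  rw [sum_add_distrib, hswap, add_neg_cancel]

/-- Here `Γ l j k` denotes `Γˡ_{jk}` and `η α β l` denotes `η^α_{βl}`. -/
theorem stmt11_general (n p : ℕ)
    (U : Set (Fin n → ℂ)) (hU : IsOpen U)
    (h : Fin n → Fin p → (Fin n → ℂ) → ℂ)
    (Γ : Fin n → Fin n → Fin n → (Fin n → ℂ) → ℂ)
    (η : Fin p → Fin p → Fin n → (Fin n → ℂ) → ℂ)
    (hhdiff : ∀ j α, DifferentiableOn ℂ (h j α) U)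
    (hηanti : ∀ α β l u, η α β l u = - η β α l u)
    (hCMP : ∀ j l : Fin n, j ≠ l → ∀ α : Fin p, ∀ u ∈ U,
      pdS l (h j α) u = Γ j j l u * h j α u - Γ l j j u * h l α u
        - ∑ β, h j β u * η α β l u)
    (R : Fin n → Fin n → (Fin n → ℂ) → ℂ)
    (hR : ∀ j k u, R j k u = ∑ α, h j α u * h k α u) :
    ∀ j k l : Fin n, j ≠ k → j ≠ l → k ≠ l → ∀ u ∈ U,
      pdS l (R j k) u = (Γ j j l u + Γ k k l u) * R j k u
        - Γ l k k u * R j l u - Γ l j j u * R k l u := by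
  intro j k l _ hjl hkl u hu
  have hdiff j α : DifferentiableAt ℂ (h j α) u :=
    (hhdiff j α).differentiableAt (hU.mem_nhds hu)
  calc pdS l (R j k) u
      = ∑ α, (h j α u * pdS l (h k α) u + h k α u * pdS l (h j α) u) := by
        rw [show R j k = _ from funext (hR j k)]
        exact pdS_sum_mul l _ _ u (hdiff j) (hdiff k)
    _ = ∑ α, ((Γ j j l u + Γ k k l u) * (h j α u * h k α u)
          - Γ l k k u * (h j α u * h l α u) - Γ l j j u * (h k α u * h l α u))
        - ∑ α, (h j α u * ∑ β, h k β u * η α β l u + h k α u * ∑ β, h j β u * η α β l u) := by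
        rw [← sum_sub_distrib]
        refine sum_congr rfl fun α _ => ?_
        rw [hCMP k l hkl α u hu, hCMP j l hjl α u hu]
        ring
    _ = (Γ j j l u + Γ k k l u) * R j k u - Γ l k k u * R j l u - Γ l j j u * R k l u := by
        rw [sum_mul_sum_add_mul_sum_of_antisymm _ _ _ fun α β => hηanti α β l u, sub_zero]
        simp only [hR, sum_sub_distrib, mul_sum]

/-- via the Codazzi–Mainardi–Peterson equations, the derivative of the
Gauß equations `R_{jkjk} = ∑_α hⱼ^α hₖ^α` gives
`∂ₗR_{jkjk} = (Γʲ_{jl} + Γᵏ_{kl})R_{jkjk} − Γˡ_{kk}R_{jljl} − Γˡ_{jj}R_{klkl}`.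
Here `Γ l j k` denotes `Γˡ_{jk}` and `η α β l` denotes `η^α_{βl}`. -/
theorem stmt11 (n p : ℕ) (hn : 3 ≤ n) (hp : 1 ≤ p)
    (U : Set (Fin n → ℂ)) (hU : IsOpen U)
    (h : Fin n → Fin p → (Fin n → ℂ) → ℂ)
    (Γ : Fin n → Fin n → Fin n → (Fin n → ℂ) → ℂ)
    (η : Fin p → Fin p → Fin n → (Fin n → ℂ) → ℂ)
    (hhdiff : ∀ j α, DifferentiableOn ℂ (h j α) U)
    (hΓdiff : ∀ l j k, DifferentiableOn ℂ (Γ l j k) U)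
    (hηdiff : ∀ α β l, DifferentiableOn ℂ (η α β l) U)
    (hηanti : ∀ α β l u, η α β l u = - η β α l u)
    (hCMP : ∀ j l : Fin n, j ≠ l → ∀ α : Fin p, ∀ u ∈ U,
      pdS l (h j α) u = Γ j j l u * h j α u - Γ l j j u * h l α u
        - ∑ β, h j β u * η α β l u)
    (R : Fin n → Fin n → (Fin n → ℂ) → ℂ)
    (hR : ∀ j k u, R j k u = ∑ α, h j α u * h k α u) :
    ∀ j k l : Fin n, j ≠ k → j ≠ l → k ≠ l → ∀ u ∈ U,
      pdS l (R j k) u = (Γ j j l u + Γ k k l u) * R j k u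
        - Γ l k k u * R j l u - Γ l j j u * R k l u :=
  stmt11_general n p U hU h Γ η hhdiff hηanti hCMP R hR
end
end

section
/- Let n ≥ 3, let U ⊆ ℂⁿ be open, and let hⱼ⁰ : U → ℂ (1 ≤ j ≤ n) be differentiable nonvanishing functions, Γˡ_{jk} : U → ℂ differentiable, and g^{kl} : U → ℂ functions. Assume: (i) ∂ₗhⱼ⁰ = Γʲ_{jl}hⱼ⁰ − Γˡ_{jj}hₗ⁰ for all j ≠ l; (ii) ∂ₗΓᵏ_{jj} + Γᵏ_{jj}(Γᵏ_{kl} − Γʲ_{jl}) + Γˡ_{jj}Γᵏ_{ll} − g^{kl}hⱼ⁰hₗ⁰ = 0 for all distinct j, k, l. Define γ_{jk} := Γᵏ_{jj}·hₖ⁰/hⱼ⁰ for j ≠ k. Then for all distinct j, k, l: ∂ₗγ_{jk} = γ_{jk}γ_{jl} − γ_{jl}γ_{lk} − γ_{jk}γ_{kl} + g^{kl}hₖ⁰hₗ⁰ on U, where ∂ₗ denotes the directional derivative along the l-th standard basis vector of ℂⁿ. -/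
/-! By the quotient rule, `∂ₗγ_{jk}` is expressed through `∂ₗΓᵏ_{jj}`, `∂ₗhₖ⁰` and `∂ₗhⱼ⁰`;
substituting `∂ₗhₖ⁰`, `∂ₗhⱼ⁰` from the Codazzi–Mainardi–Peterson equations and `∂ₗΓᵏ_{jj}` from the
compatibility conditions turns (gaj) into an identity of rational functions in the values of
`h⁰`, `Γ` and `g`. -/

noncomputable section

section

variable {n : ℕ} {l : Fin n} {f p : (Fin n → ℂ) → ℂ} {u : Fin n → ℂ}

theorem pdS_mul (hf : DifferentiableAt ℂ f u) (hp : DifferentiableAt ℂ p u) :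
    pdS l (fun x => f x * p x) u = f u * pdS l p u + p u * pdS l f u := by
  simp [pdS, fderiv_fun_mul hf hp]

theorem pdS_inv (hp : DifferentiableAt ℂ p u) (hpu : p u ≠ 0) :
    pdS l (fun x => (p x)⁻¹) u = -pdS l p u / p u ^ 2 := by
  have hinv : HasFDerivAt (fun x => (p x)⁻¹) (-(p u ^ 2)⁻¹ • fderiv ℂ p u) u :=
    (hasDerivAt_inv hpu).comp_hasFDerivAt u hp.hasFDerivAt
  simp only [pdS, hinv.fderiv, smul_apply, smul_eq_mul]
  ring

theorem pdS_div (hf : DifferentiableAt ℂ f u) (hp : DifferentiableAt ℂ p u) (hpu : p u ≠ 0) :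
    pdS l (fun x => f x / p x) u = (pdS l f u * p u - f u * pdS l p u) / p u ^ 2 := by
  simp_rw [div_eq_mul_inv]
  rw [pdS_mul hf (hp.fun_inv hpu), pdS_inv hp hpu]
  field_simp
  ring

end

/-- `Γ l j k` denotes `Γˡ_{jk}` and `gm k l` denotes `g^{kl}`. -/
theorem stmt14_general (n : ℕ)
    (U : Set (Fin n → ℂ)) (hU : IsOpen U)
    (h0 : Fin n → (Fin n → ℂ) → ℂ)
    (Γ : Fin n → Fin n → Fin n → (Fin n → ℂ) → ℂ)
    (gm : Fin n → Fin n → (Fin n → ℂ) → ℂ)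
    (hh0diff : ∀ j, DifferentiableOn ℂ (h0 j) U)
    (hh0ne : ∀ j, ∀ u ∈ U, h0 j u ≠ 0)
    (hΓdiff : ∀ l j k, DifferentiableOn ℂ (Γ l j k) U)
    (hCMP : ∀ j l : Fin n, j ≠ l → ∀ u ∈ U,
      pdS l (h0 j) u = Γ j j l u * h0 j u - Γ l j j u * h0 l u)
    (hcomp : ∀ j k l : Fin n, j ≠ k → j ≠ l → k ≠ l → ∀ u ∈ U,
      pdS l (Γ k j j) u + Γ k j j u * (Γ k k l u - Γ j j l u)
        + Γ l j j u * Γ k l l u - gm k l u * h0 j u * h0 l u = 0)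
    (γ : Fin n → Fin n → (Fin n → ℂ) → ℂ)
    (hγ : ∀ j k : Fin n, j ≠ k → ∀ u : Fin n → ℂ,
      γ j k u = Γ k j j u * h0 k u / h0 j u) :
    ∀ j k l : Fin n, j ≠ k → j ≠ l → k ≠ l → ∀ u ∈ U,
      pdS l (γ j k) u = γ j k u * γ j l u - γ j l u * γ l k u
        - γ j k u * γ k l u + gm k l u * h0 k u * h0 l u := by
  intro j k l hjk hjl hkl u hu
  have hdiff {F : (Fin n → ℂ) → ℂ} (hF : DifferentiableOn ℂ F U) : DifferentiableAt ℂ F u :=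
    hF.differentiableAt (hU.mem_nhds hu)
  have hΓkjj : pdS l (Γ k j j) u = gm k l u * h0 j u * h0 l u
      - Γ k j j u * (Γ k k l u - Γ j j l u) - Γ l j j u * Γ k l l u := by
    linear_combination hcomp j k l hjk hjl hkl u hu
  rw [hγ j k hjk u, hγ j l hjl u, hγ l k hkl.symm u, hγ k l hkl u,
    show γ j k = fun x => Γ k j j x * h0 k x / h0 j x from funext (hγ j k hjk),
    pdS_div ((hdiff (hΓdiff k j j)).fun_mul (hdiff (hh0diff k))) (hdiff (hh0diff j)) (hh0ne j u hu),
    pdS_mul (hdiff (hΓdiff k j j)) (hdiff (hh0diff k)), hCMP k l hkl u hu, hCMP j l hjl u hu, hΓkjj]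
  field_simp [hh0ne j u hu, hh0ne k u hu, hh0ne l u hu]
  ring

/-- equation (gaj): from the Codazzi–Mainardi–Peterson equations (i)
of the quadric and the compatibility conditions (ii), the normalized Christoffel
symbols `γ_{jk} := Γᵏ_{jj}hₖ⁰/hⱼ⁰` satisfy
`∂ₗγ_{jk} = γ_{jk}γ_{jl} − γ_{jl}γ_{lk} − γ_{jk}γ_{kl} + g^{kl}hₖ⁰hₗ⁰`.
Here `Γ l j k` denotes `Γˡ_{jk}` and `gm k l` denotes `g^{kl}`. -/
theorem stmt14 (n : ℕ) (hn : 3 ≤ n)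
    (U : Set (Fin n → ℂ)) (hU : IsOpen U)
    (h0 : Fin n → (Fin n → ℂ) → ℂ)
    (Γ : Fin n → Fin n → Fin n → (Fin n → ℂ) → ℂ)
    (gm : Fin n → Fin n → (Fin n → ℂ) → ℂ)
    (hh0diff : ∀ j, DifferentiableOn ℂ (h0 j) U)
    (hh0ne : ∀ j, ∀ u ∈ U, h0 j u ≠ 0)
    (hΓdiff : ∀ l j k, DifferentiableOn ℂ (Γ l j k) U)
    (hCMP : ∀ j l : Fin n, j ≠ l → ∀ u ∈ U,
      pdS l (h0 j) u = Γ j j l u * h0 j u - Γ l j j u * h0 l u)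
    (hcomp : ∀ j k l : Fin n, j ≠ k → j ≠ l → k ≠ l → ∀ u ∈ U,
      pdS l (Γ k j j) u + Γ k j j u * (Γ k k l u - Γ j j l u)
        + Γ l j j u * Γ k l l u - gm k l u * h0 j u * h0 l u = 0)
    (γ : Fin n → Fin n → (Fin n → ℂ) → ℂ)
    (hγ : ∀ j k : Fin n, j ≠ k → ∀ u : Fin n → ℂ,
      γ j k u = Γ k j j u * h0 k u / h0 j u) :
    ∀ j k l : Fin n, j ≠ k → j ≠ l → k ≠ l → ∀ u ∈ U,
      pdS l (γ j k) u = γ j k u * γ j l u - γ j l u * γ l k u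
        - γ j k u * γ k l u + gm k l u * h0 k u * h0 l u :=
  stmt14_general n U hU h0 Γ gm hh0diff hh0ne hΓdiff hCMP hcomp γ hγ
end
end

section
/- Let n ≥ 2, let U₁,…,Uₙ ⊆ ℂ be open, let f₁,…,f_{n-1}, g₁,…,g_{n-1} : Uₖ → ℂ and h : Uₙ → ℂ be twice differentiable, and let Y be the associated map. Let V ⊆ U₁×⋯×Uₙ be open and let N : V → ℂ²ⁿ⁻¹ be any map satisfying ⟨N(u), ∂ⱼY(u)⟩ = 0 for all u ∈ V and all 1 ≤ j ≤ n. Then the second fundamental form of Y with respect to N is diagonal: ⟨N(u), ∂ₖ∂ⱼY(u)⟩ = 0 for all u ∈ V with cos(uʲ) ≠ 0 and all 1 ≤ k < j ≤ n, where ∂ⱼ denotes the directional derivative along the j-th standard basis vector of ℂⁿ. -/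
/-! Fix `k < j`. The coordinate `uʲ` enters the terms of `Y` of index `< j` only through their
common factor `cos uʲ`, and the other terms do not involve `uᵏ`. Hence `Y = cos(uʲ) R + Q` with `R`
independent of `uʲ` and `Q` independent of `uᵏ`, so `∂ₖY = cos(uʲ) ∂ₖR` and
`∂ₖ∂ⱼY = -sin(uʲ) ∂ₖR = -tan(uʲ) ∂ₖY` is tangent, hence annihilated by every normal field. -/

noncomputable section

open Complex Finset

section Directional

variable {𝕜 E F : Type*} [NontriviallyNormedField 𝕜] [NormedAddCommGroup E] [NormedSpace 𝕜 E]
  [NormedAddCommGroup F] [NormedSpace 𝕜 F]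

theorem fderiv_apply_eq_zero_of_forall_add_smul {G : E → F} {v : E}
    (hG : ∀ u (t : 𝕜), G (u + t • v) = G u) (u : E) : fderiv 𝕜 G u v = 0 := by
  by_cases hd : DifferentiableAt 𝕜 G u
  · rw [← hd.lineDeriv_eq_fderiv, lineDeriv, funext (hG u), deriv_const]
  · simp [fderiv_zero_of_not_differentiableAt hd]

theorem fderiv_fderiv_apply_eq_zero_of_forall_add_smul {G : E → F} {w : E}
    (hG : ∀ u (t : 𝕜), G (u + t • w) = G u) (v u : E) :
    fderiv 𝕜 (fun u => fderiv 𝕜 G u v) u w = 0 :=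
  fderiv_apply_eq_zero_of_forall_add_smul (G := fun u => fderiv 𝕜 G u v)
    (fun u t => by rw [← fderiv_comp_add_right, funext fun x => hG x t]) u

theorem exists_fderiv_fderiv_apply_eq_smul_of_eq_smul_add {Y R Q : E → F} {a : E → 𝕜}
    {v w : E} {V : Set E} (hV : IsOpen V) (hY : ∀ u, Y u = a u • R u + Q u)
    (ha : ContDiff 𝕜 2 a) (hR : DifferentiableOn 𝕜 R V) (hQ : DifferentiableOn 𝕜 Q V)
    (hRv : ∀ u (t : 𝕜), R (u + t • v) = R u) (haw : ∀ u (t : 𝕜), a (u + t • w) = a u)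
    (hQw : ∀ u (t : 𝕜), Q (u + t • w) = Q u) {u₀ : E} (hu₀ : u₀ ∈ V) (ha₀ : a u₀ ≠ 0) :
    ∃ c : 𝕜, fderiv 𝕜 (fun u => fderiv 𝕜 Y u v) u₀ w = c • fderiv 𝕜 Y u₀ w := by
  obtain rfl : Y = fun u => a u • R u + Q u := funext hY
  have ha₁ : Differentiable 𝕜 a := ha.differentiable (by norm_num)
  have hav : Differentiable 𝕜 (fun u => fderiv 𝕜 a u v) :=
    ((ha.fderiv_right (m := 1) (by norm_num)).differentiable one_ne_zero).clm_apply
      (differentiable_const v)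
  have hRat : ∀ u ∈ V, DifferentiableAt 𝕜 R u := fun u hu => hR.differentiableAt (hV.mem_nhds hu)
  have hQat : ∀ u ∈ V, DifferentiableAt 𝕜 Q u := fun u hu => hQ.differentiableAt (hV.mem_nhds hu)
  have hYderiv : ∀ u ∈ V, HasFDerivAt (fun u => a u • R u + Q u)
      (a u • fderiv 𝕜 R u + (fderiv 𝕜 a u).smulRight (R u) + fderiv 𝕜 Q u) u := fun u hu =>
    ((ha₁ u).hasFDerivAt.smul (hRat u hu).hasFDerivAt).add (hQat u hu).hasFDerivAt
  have hYw : fderiv 𝕜 (fun u => a u • R u + Q u) u₀ w = a u₀ • fderiv 𝕜 R u₀ w := by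
    simp [(hYderiv u₀ hu₀).fderiv, fderiv_apply_eq_zero_of_forall_add_smul haw,
      fderiv_apply_eq_zero_of_forall_add_smul hQw]
  have hYv : (fun u => fderiv 𝕜 (fun u => a u • R u + Q u) u v) =ᶠ[nhds u₀]
      fun u => fderiv 𝕜 a u v • R u + fderiv 𝕜 Q u v := by
    filter_upwards [hV.mem_nhds hu₀] with u hu
    simp [(hYderiv u hu).fderiv, fderiv_apply_eq_zero_of_forall_add_smul hRv]
  -- where `∂ᵥY` is not differentiable, its `fderiv` is the junk value `0`
  by_cases hd : DifferentiableAt 𝕜 (fun u => fderiv 𝕜 (fun u => a u • R u + Q u) u v) u₀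
  swap
  · exact ⟨0, by rw [fderiv_zero_of_not_differentiableAt hd, zero_smul]; rfl⟩
  have haR : DifferentiableAt 𝕜 (fun u => fderiv 𝕜 a u v • R u) u₀ := (hav u₀).smul (hRat u₀ hu₀)
  have hQv : DifferentiableAt 𝕜 (fun u => fderiv 𝕜 Q u v) u₀ := by
    simpa using (hd.congr_of_eventuallyEq hYv.symm).fun_sub haR
  refine ⟨fderiv 𝕜 a u₀ v / a u₀, ?_⟩
  rw [hYv.fderiv_eq, fderiv_fun_add haR hQv, hYw, smul_smul, div_mul_cancel₀ _ ha₀]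
  simp [fderiv_fun_smul (hav u₀) (hRat u₀ hu₀),
    fderiv_fderiv_apply_eq_zero_of_forall_add_smul haw,
    fderiv_fderiv_apply_eq_zero_of_forall_add_smul hQw]

end Directional

theorem apply_add_smul_single_eq_of_forall_update {ι 𝕜 X : Type*} [DecidableEq ι] [Semiring 𝕜]
    {G : (ι → 𝕜) → X} {p : ι} (hG : ∀ u x, G (Function.update u p x) = G u) (u : ι → 𝕜)
    (t : 𝕜) : G (u + t • Pi.single p 1) = G u := by
  have hu : u + t • Pi.single p 1 = Function.update u p (u p + t) := by
    ext i
    rcases eq_or_ne i p with rfl | hi <;> simp [*]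
  rw [hu, hG]

theorem Cprod_eq_cos_mul_prod_erase {n k : ℕ} {j : Fin n} (hkj : k ≤ j) (u : Fin n → ℂ) :
    Cprod n k u = cos (u j) * ∏ i ∈ (univ.filter fun i : Fin n => k ≤ (i : ℕ)).erase j, cos (u i) :=
  (mul_prod_erase _ _ (by simpa using hkj)).symm

section petY

variable {m : ℕ} (f g : Fin m → ℂ → ℂ) (h : ℂ → ℂ)

def petTerm (l : Fin m) (x : ℂ) : Fin (2*m+1) → ℂ := fun i =>
  f l x * ((if (i : ℕ) = 2*l.val then 1 else 0) * cos (g l x) +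
    (if (i : ℕ) = 2*l.val + 1 then 1 else 0) * sin (g l x))

def petLast (x : ℂ) : Fin (2*m+1) → ℂ := fun i => (if (i : ℕ) = 2*m then 1 else 0) * h x

def petYBelow (j : Fin (m+1)) (u : Fin (m+1) → ℂ) : Fin (2*m+1) → ℂ :=
  ∑ l ∈ univ.filter fun l : Fin m => (l : ℕ) < j,
    (∏ i ∈ (univ.filter fun i : Fin (m+1) => (l : ℕ) + 1 ≤ i).erase j, cos (u i)) •
      petTerm f g l (u l.castSucc)

def petYAbove (j : Fin (m+1)) (u : Fin (m+1) → ℂ) : Fin (2*m+1) → ℂ :=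
  ∑ l ∈ univ.filter fun l : Fin m => (j : ℕ) ≤ l,
    Cprod (m+1) (l + 1) u • petTerm f g l (u l.castSucc) + petLast h (u (Fin.last m))

theorem petY_eq_sum (u : Fin (m+1) → ℂ) :
    petY m f g h u = ∑ l : Fin m, Cprod (m+1) (l + 1) u • petTerm f g l (u l.castSucc) +
      petLast h (u (Fin.last m)) := by
  ext i
  simp [petY, petTerm, petLast, mul_assoc]

theorem petY_eq_cos_smul_add (j : Fin (m+1)) (u : Fin (m+1) → ℂ) :
    petY m f g h u = cos (u j) • petYBelow f g j u + petYAbove f g h j u := by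
  rw [petY_eq_sum, ← sum_filter_add_sum_filter_not univ fun l : Fin m => (l : ℕ) < j,
    petYAbove, petYBelow, smul_sum, add_assoc]
  simp only [not_lt]
  congr 1
  refine sum_congr rfl fun l hl => ?_
  rw [Cprod_eq_cos_mul_prod_erase (by simpa using hl), mul_smul]

theorem petYBelow_update_self (j : Fin (m+1)) (u : Fin (m+1) → ℂ) (x : ℂ) :
    petYBelow f g j (Function.update u j x) = petYBelow f g j u := by
  refine sum_congr rfl fun l hl => ?_
  have hl : l.castSucc ≠ j := Fin.ne_of_lt (by simpa [Fin.lt_def] using hl)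
  rw [Function.update_of_ne hl]
  congr 1
  exact prod_congr rfl fun i hi => by rw [Function.update_of_ne (ne_of_mem_erase hi)]

theorem petYAbove_update_of_lt {j k : Fin (m+1)} (hkj : k < j) (u : Fin (m+1) → ℂ) (x : ℂ) :
    petYAbove f g h j (Function.update u k x) = petYAbove f g h j u := by
  have hkj : (k : ℕ) < j := hkj
  have hlast : Fin.last m ≠ k := Fin.ne_of_val_ne (by simp; omega)
  rw [petYAbove, petYAbove, Function.update_of_ne hlast]
  congr 1
  refine sum_congr rfl fun l hl => ?_
  have hl : (j : ℕ) ≤ l := by simpa using hl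
  rw [Function.update_of_ne (Fin.ne_of_val_ne (by simp; omega))]
  congr 1
  refine prod_congr rfl fun i hi => ?_
  have hi : (l : ℕ) + 1 ≤ i := by simpa using hi
  rw [Function.update_of_ne (Fin.ne_of_val_ne (by omega))]

variable {f g h}

theorem differentiableAt_petTerm {l : Fin m} {x : ℂ} (hf : DifferentiableAt ℂ (f l) x)
    (hg : DifferentiableAt ℂ (g l) x) : DifferentiableAt ℂ (petTerm f g l) x := by
  unfold petTerm
  fun_prop

theorem differentiableAt_petYBelow {u : Fin (m+1) → ℂ}
    (hf : ∀ l, DifferentiableAt ℂ (f l) (u l.castSucc))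
    (hg : ∀ l, DifferentiableAt ℂ (g l) (u l.castSucc)) (j : Fin (m+1)) :
    DifferentiableAt ℂ (petYBelow f g j) u := by
  unfold petYBelow
  have := fun l => differentiableAt_petTerm (hf l) (hg l)
  fun_prop

theorem differentiableAt_petYAbove {u : Fin (m+1) → ℂ}
    (hf : ∀ l, DifferentiableAt ℂ (f l) (u l.castSucc))
    (hg : ∀ l, DifferentiableAt ℂ (g l) (u l.castSucc))
    (hh : DifferentiableAt ℂ h (u (Fin.last m))) (j : Fin (m+1)) :
    DifferentiableAt ℂ (petYAbove f g h j) u := by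
  unfold petYAbove petLast Cprod
  have := fun l => differentiableAt_petTerm (hf l) (hg l)
  fun_prop

end petY

theorem exists_pd_pd_petY_eq_smul_pd {m : ℕ} {f g : Fin m → ℂ → ℂ} {h : ℂ → ℂ}
    {V : Set (Fin (m+1) → ℂ)} (hV : IsOpen V)
    (hf : ∀ u ∈ V, ∀ l, DifferentiableAt ℂ (f l) (u l.castSucc))
    (hg : ∀ u ∈ V, ∀ l, DifferentiableAt ℂ (g l) (u l.castSucc))
    (hh : ∀ u ∈ V, DifferentiableAt ℂ h (u (Fin.last m)))
    {u : Fin (m+1) → ℂ} (hu : u ∈ V) {j k : Fin (m+1)} (hkj : k < j) (hcos : cos (u j) ≠ 0) :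
    ∃ c : ℂ, pd k (pd j (petY m f g h)) u = c • pd k (petY m f g h) u :=
  exists_fderiv_fderiv_apply_eq_smul_of_eq_smul_add hV (petY_eq_cos_smul_add f g h j)
    (by fun_prop)
    (fun u hu => (differentiableAt_petYBelow (hf u hu) (hg u hu) j).differentiableWithinAt)
    (fun u hu =>
      (differentiableAt_petYAbove (hf u hu) (hg u hu) (hh u hu) j).differentiableWithinAt)
    (apply_add_smul_single_eq_of_forall_update (petYBelow_update_self f g j))
    (apply_add_smul_single_eq_of_forall_update (G := fun u => cos (u j)) fun u x => by
      rw [Function.update_of_ne hkj.ne'])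
    (apply_add_smul_single_eq_of_forall_update (petYAbove_update_of_lt f g h hkj)) hu hcos

theorem stmt19_general (m : ℕ)
    (U : Fin (m+1) → Set ℂ) (hU : ∀ k, IsOpen (U k))
    (f g : Fin m → ℂ → ℂ) (h : ℂ → ℂ)
    (hf : ∀ k : Fin m, DifferentiableOn ℂ (f k) (U k.castSucc))
    (hg : ∀ k : Fin m, DifferentiableOn ℂ (g k) (U k.castSucc))
    (hh : DifferentiableOn ℂ h (U (Fin.last m)))
    (V : Set (Fin (m+1) → ℂ)) (hV : IsOpen V)
    (hVsub : ∀ u ∈ V, ∀ k, u k ∈ U k)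
    (N : (Fin (m+1) → ℂ) → (Fin (2*m+1) → ℂ))
    (hN : ∀ u ∈ V, ∀ j : Fin (m+1), cdot (N u) (pd j (petY m f g h) u) = 0) :
    ∀ u ∈ V, ∀ j k : Fin (m+1), k < j → Complex.cos (u j) ≠ 0 →
      cdot (N u) (pd k (pd j (petY m f g h)) u) = 0 := by
  intro u hu j k hkj hcos
  have hAt {φ : ℂ → ℂ} {p : Fin (m+1)} (hφ : DifferentiableOn ℂ φ (U p)) (u : Fin (m+1) → ℂ)
      (hu : u ∈ V) : DifferentiableAt ℂ φ (u p) :=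
    hφ.differentiableAt ((hU p).mem_nhds (hVsub u hu p))
  obtain ⟨c, hc⟩ := exists_pd_pd_petY_eq_smul_pd hV (fun u hu l => hAt (hf l) u hu)
    (fun u hu l => hAt (hg l) u hu) (hAt hh) hu hkj hcos
  change N u ⬝ᵥ _ = 0
  rw [hc, dotProduct_smul, show N u ⬝ᵥ pd k (petY m f g h) u = 0 from hN u hu k, smul_zero]

/-- for any normal field `N` of `Y` on an open `V ⊆ U₁×⋯×Uₙ`
(here `n = m+1 ≥ 2`), the second fundamental form of `Y` with respect to `N`
is diagonal: `⟨N(u), ∂ₖ∂ⱼY(u)⟩ = 0` for `k < j` wherever `cos(uʲ) ≠ 0`. -/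
theorem stmt19 (m : ℕ) (hm : 1 ≤ m)
    (U : Fin (m+1) → Set ℂ) (hU : ∀ k, IsOpen (U k))
    (f g : Fin m → ℂ → ℂ) (h : ℂ → ℂ)
    (hf : ∀ k : Fin m, DifferentiableOn ℂ (f k) (U k.castSucc))
    (hf' : ∀ k : Fin m, DifferentiableOn ℂ (deriv (f k)) (U k.castSucc))
    (hg : ∀ k : Fin m, DifferentiableOn ℂ (g k) (U k.castSucc))
    (hg' : ∀ k : Fin m, DifferentiableOn ℂ (deriv (g k)) (U k.castSucc))
    (hh : DifferentiableOn ℂ h (U (Fin.last m)))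
    (hh' : DifferentiableOn ℂ (deriv h) (U (Fin.last m)))
    (V : Set (Fin (m+1) → ℂ)) (hV : IsOpen V)
    (hVsub : ∀ u ∈ V, ∀ k, u k ∈ U k)
    (N : (Fin (m+1) → ℂ) → (Fin (2*m+1) → ℂ))
    (hN : ∀ u ∈ V, ∀ j : Fin (m+1), cdot (N u) (pd j (petY m f g h) u) = 0) :
    ∀ u ∈ V, ∀ j k : Fin (m+1), k < j → Complex.cos (u j) ≠ 0 →
      cdot (N u) (pd k (pd j (petY m f g h)) u) = 0 :=
  stmt19_general m U hU f g h hf hg hh V hV hVsub N hN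
end
end
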